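/- arXiv:2411.15479 — 8 statements merged into one kernel-verified Lean document; each statement's English description precedes it below -/
import Mathlib

section
/- If a polynomial f in n variables is a sum of squares, f = Σ_{j=1}^t g_j^2, then for each j, the Newton polytope of g_j is contained in (1/2) times the Newton polytope of f. -/
set_option maxHeartbeats 1000000


open Pointwise

/-- The Newton polytope of a polynomial: the convex hull (in ℝⁿ) of its support. -/
noncomputable def newtonPolytope {n : ℕ} (f : MvPolynomial (Fin n) ℝ) : Set (Fin n → ℝ) :=
  convexHull ℝ ((fun α : Fin n →₀ ℕ => fun i => (α i : ℝ)) '' (f.support : Set (Fin n →₀ ℕ)))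

namespace NewtonSos

noncomputable def e {n : ℕ} : (Fin n →₀ ℕ) → (Fin n → ℝ) := fun α i => (α i : ℝ)

lemma e_inj {n : ℕ} : Function.Injective (e (n := n)) := by
  intro a b h
  ext i
  have := congrFun h i
  simpa [e] using this

lemma e_add {n : ℕ} (a b : Fin n →₀ ℕ) : e (a + b) = e a + e b := by
  funext i; simp [e]

end NewtonSos

open NewtonSos MvPolynomial in
/-- If f = Σ_{j} g_j², then New(g_j) ⊆ (1/2)·New(f) for each j. -/
theorem stmt_0 {n t : ℕ} (f : MvPolynomial (Fin n) ℝ) (g : Fin t → MvPolynomial (Fin n) ℝ)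
    (hf : f = ∑ j, (g j) ^ 2) (j : Fin t) :
    newtonPolytope (g j) ⊆ (1 / 2 : ℝ) • newtonPolytope f := by
  classical
  -- S : union of supports of the g_j, mapped into ℝⁿ
  set S : Set (Fin n → ℝ) := ⋃ k, e '' ((g k).support : Set (Fin n →₀ ℕ)) with hS
  have hSfin : S.Finite := Set.finite_iUnion fun k => (Finset.finite_toSet _).image _
  set P : Set (Fin n → ℝ) := convexHull ℝ S with hP
  -- Key claim: extreme points of P lie in (1/2) • (image of supp f)
  have key : P.extremePoints ℝ ⊆
      (1 / 2 : ℝ) • (e '' (f.support : Set (Fin n →₀ ℕ))) := by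
    intro x hx
    have hxS : x ∈ S := extremePoints_convexHull_subset hx
    obtain ⟨j0, β0, hβ0, rfl⟩ : ∃ j0 β0, β0 ∈ (g j0).support ∧ e β0 = x := by
      simpa [hS] using hxS
    -- coefficient of β0 + β0 in f is the sum of squares of the β0-coefficients
    have hcoeff : coeff (β0 + β0) f = ∑ k, (coeff β0 (g k)) ^ 2 := by
      rw [hf, coeff_sum]
      refine Finset.sum_congr rfl fun k _ => ?_
      rw [sq, coeff_mul]
      rw [Finset.sum_eq_single (β0, β0)]
      · exact (sq _).symm
      · rintro ⟨u, v⟩ huv hne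
        have huvsum : u + v = β0 + β0 := Finset.HasAntidiagonal.mem_antidiagonal.1 huv
        by_contra hzero
        have hu : coeff u (g k) ≠ 0 := fun h => hzero (by simp [h])
        have hv : coeff v (g k) ≠ 0 := fun h => hzero (by simp [h])
        have heu : e u ∈ S := Set.mem_iUnion.2 ⟨k, ⟨u, by simpa using hu, rfl⟩⟩
        have hev : e v ∈ S := Set.mem_iUnion.2 ⟨k, ⟨v, by simpa using hv, rfl⟩⟩
        have heuP : e u ∈ P := subset_convexHull ℝ S heu
        have hevP : e v ∈ P := subset_convexHull ℝ S hev
        have hmid : e β0 ∈ openSegment ℝ (e u) (e v) := by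
          refine ⟨1/2, 1/2, by norm_num, by norm_num, by norm_num, ?_⟩
          have : e u + e v = e β0 + e β0 := by rw [← e_add, ← e_add, huvsum]
          funext i
          have := congrFun this i
          simp only [Pi.add_apply] at this
          simp only [Pi.add_apply, Pi.smul_apply, smul_eq_mul]
          linarith
        obtain ⟨h1, h2⟩ := (mem_extremePoints.1 hx).2 (e u) heuP (e v) hevP hmid
        have : u = β0 := e_inj h1
        have : v = β0 := e_inj h2
        exact hne (by aesop)
      · intro h
        exact absurd (Finset.HasAntidiagonal.mem_antidiagonal.2 (by simp)) h
    -- the coefficient is nonzero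
    have hpos : coeff (β0 + β0) f ≠ 0 := by
      rw [hcoeff]
      have hne : coeff β0 (g j0) ≠ 0 := by simpa [mem_support_iff] using hβ0
      have h1 : (0 : ℝ) < (coeff β0 (g j0)) ^ 2 :=
        (sq_nonneg _).lt_of_ne (Ne.symm (pow_ne_zero 2 hne))
      have : (0 : ℝ) < ∑ k, (coeff β0 (g k)) ^ 2 := by
        refine lt_of_lt_of_le h1 ?_
        exact Finset.single_le_sum (f := fun k => (coeff β0 (g k)) ^ 2) (fun k _ => sq_nonneg _) (Finset.mem_univ j0)
      exact ne_of_gt this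
    refine ⟨e (β0 + β0), ⟨β0 + β0, by simpa [mem_support_iff] using hpos, rfl⟩, ?_⟩
    rw [e_add]
    funext i
    simp only [Pi.smul_apply, Pi.add_apply, smul_eq_mul]
    ring
  -- P equals the convex hull of its extreme points (Krein–Milman for polytopes)
  have hPcompact : IsCompact P := hSfin.isCompact_convexHull ℝ
  have hPconvex : Convex ℝ P := convex_convexHull ℝ S
  have hextfin : (P.extremePoints ℝ).Finite :=
    hSfin.subset extremePoints_convexHull_subset
  have hKM : P = convexHull ℝ (P.extremePoints ℝ) := by
    have := closure_convexHull_extremePoints hPcompact hPconvex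
    rw [(hextfin.isClosed_convexHull ℝ).closure_eq] at this
    exact this.symm
  -- conclude
  intro x hx
  have hx' : x ∈ P := by
    refine convexHull_mono ?_ hx
    intro y hy
    exact Set.mem_iUnion.2 ⟨j, hy⟩
  rw [hKM] at hx'
  have : x ∈ convexHull ℝ ((1 / 2 : ℝ) • (e '' (f.support : Set (Fin n →₀ ℕ)))) :=
    convexHull_mono key hx'
  rwa [convexHull_smul] at this
end

section
/- A symmetric polynomial matrix F ∈ 𝕊^p[x] is an SOS matrix if and only if the scalar polynomial yᵀF(x)y in variables (x,y) ∈ ℝ^{n+p} is a sum of squares of polynomials. -/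
/-!
If `F = Rᵀ R` then `yᵀ F y = ∑ₖ (R y)ₖ²`. Conversely, read `yᵀ F y = ∑ₖ gₖ²` in `A[y]` with
`A = ℝ[x]`, which is formally real. Setting `y = 0` gives `∑ₖ gₖ(0)² = 0`, so every `gₖ` has
zero constant term; applying `∂ᵢ∂ⱼ` at `y = 0` then gives
`Fᵢⱼ + Fⱼᵢ = 2 ∑ₖ ∂ᵢgₖ(0) ∂ⱼgₖ(0)`, i.e. `F = Rᵀ R` with `Rₖᵢ = ∂ᵢgₖ(0)` by symmetry.
-/

open Matrix MvPolynomial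

theorem IsSumSq.map {R S : Type*} [NonAssocSemiring R] [NonAssocSemiring S] (f : R →+* S) {s : R}
    (hs : IsSumSq s) : IsSumSq (f s) := by
  induction hs with
  | zero => simp
  | sq_add a _ ih => simpa using IsSumSq.sq_add (f a) ih

theorem IsFormallyReal.eq_zero_of_sum_sq_eq_zero {A κ : Type*} [CommRing A] [IsFormallyReal A]
    {s : Finset κ} {a : κ → A} (h : ∑ k ∈ s, a k ^ 2 = 0) {k : κ} (hk : k ∈ s) : a k = 0 := by
  classical
  rw [← Finset.add_sum_erase s _ hk] at h
  exact pow_eq_zero_iff two_ne_zero |>.mp <|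
    eq_zero_of_add_right (IsSquare.sq (a k)).isSumSq (IsSumSq.sum_sq _ _) h

theorem IsFormallyReal.two_mul_injective {A : Type*} [CommRing A] [IsFormallyReal A] :
    Function.Injective fun a : A ↦ 2 * a := by
  intro a b h
  have h2 : 2 * (a - b) = 0 := by rw [mul_sub, sub_eq_zero]; exact h
  rw [← sub_eq_zero, ← pow_eq_zero_iff two_ne_zero]
  exact eq_zero_of_add_right (IsSquare.sq _).isSumSq (IsSquare.sq _).isSumSq
    (by rw [← two_mul, sq, ← mul_assoc, h2, zero_mul])

instance MvPolynomial.instIsFormallyReal {σ R : Type*} [CommRing R] [IsDomain R] [Infinite R]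
    [IsFormallyReal R] : IsFormallyReal (MvPolynomial σ R) :=
  .of_eq_zero_of_eq_zero_of_mul_self_add fun {s a} hs h ↦ MvPolynomial.funext fun x ↦ by
    have hx : eval x a * eval x a + eval x s = 0 := by simpa using congrArg (eval x) h
    simpa using IsFormallyReal.eq_zero_of_add_right (IsSumSq.mul_self _) (hs.map (eval x)) hx

theorem MvPolynomial.constantCoeff_pderiv_pderiv_sq {σ A : Type*} [CommSemiring A]
    {h : MvPolynomial σ A} (h0 : constantCoeff h = 0) (i j : σ) :
    constantCoeff (pderiv i (pderiv j (h ^ 2))) =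
      2 * (constantCoeff (pderiv i h) * constantCoeff (pderiv j h)) := by
  simp only [sq, pderiv_mul, map_add, map_mul, h0]
  ring

namespace Matrix

variable {ι κ A : Type*} [Fintype ι] [Fintype κ]

noncomputable def quadraticPoly [CommSemiring A] (F : Matrix ι ι A) : MvPolynomial ι A :=
  ∑ i, ∑ j, X i * X j * C (F i j)

theorem quadraticPoly_transpose_mul_self [CommSemiring A] (R : Matrix κ ι A) :
    (Rᵀ * R).quadraticPoly = ∑ k, (∑ i, X i * C (R k i)) ^ 2 := by
  simp only [quadraticPoly, mul_apply, transpose_apply, map_sum, Finset.mul_sum, sq,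
    Finset.sum_mul]
  conv_rhs => rw [Finset.sum_comm]
  refine Finset.sum_congr rfl fun i _ ↦ ?_
  rw [Finset.sum_comm]
  refine Finset.sum_congr rfl fun k _ ↦ Finset.sum_congr rfl fun j _ ↦ ?_
  simp only [map_mul]
  ring

noncomputable def jacobianAtZero [CommSemiring A] (g : κ → MvPolynomial ι A) : Matrix κ ι A :=
  of fun k i ↦ constantCoeff (pderiv i (g k))

theorem constantCoeff_pderiv_pderiv_quadraticPoly [DecidableEq ι] [CommSemiring A]
    (F : Matrix ι ι A) (i j : ι) :
    constantCoeff (pderiv i (pderiv j F.quadraticPoly)) = F i j + F j i := by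
  simp [quadraticPoly, pderiv_X, Pi.single_apply, mul_add, Finset.sum_add_distrib]

theorem eq_transpose_mul_self_of_quadraticPoly_eq_sum_sq [DecidableEq ι] [CommRing A]
    [IsFormallyReal A] {F : Matrix ι ι A} (hF : F.IsSymm) {g : κ → MvPolynomial ι A}
    (hg : F.quadraticPoly = ∑ k, g k ^ 2) :
    F = (jacobianAtZero g)ᵀ * jacobianAtZero g := by
  have hg0 : ∀ k, constantCoeff (g k) = 0 := by
    have h := congrArg constantCoeff hg
    simp only [quadraticPoly, map_sum, map_mul, constantCoeff_X, zero_mul, Finset.sum_const_zero,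
      map_pow] at h
    exact fun k ↦ IsFormallyReal.eq_zero_of_sum_sq_eq_zero h.symm (Finset.mem_univ k)
  ext i j
  apply IsFormallyReal.two_mul_injective
  have h := congrArg (fun q ↦ constantCoeff (pderiv i (pderiv j q))) hg
  simp only [constantCoeff_pderiv_pderiv_quadraticPoly, map_sum,
    constantCoeff_pderiv_pderiv_sq (hg0 _), ← Finset.mul_sum, hF.apply] at h
  simpa [two_mul, mul_apply, jacobianAtZero] using h

theorem exists_eq_transpose_mul_self_iff [CommRing A] [IsFormallyReal A] {F : Matrix ι ι A}
    (hF : F.IsSymm) :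
    (∃ (s : ℕ) (R : Matrix (Fin s) ι A), F = Rᵀ * R) ↔
      ∃ (t : ℕ) (g : Fin t → MvPolynomial ι A), F.quadraticPoly = ∑ k, g k ^ 2 := by
  classical
  constructor
  · rintro ⟨s, R, rfl⟩
    exact ⟨s, _, quadraticPoly_transpose_mul_self R⟩
  · rintro ⟨t, g, hg⟩
    exact ⟨t, _, eq_transpose_mul_self_of_quadraticPoly_eq_sum_sq hF hg⟩

end Matrix

theorem RingEquiv.exists_eq_sum_sq_iff {R S : Type*} [CommSemiring R] [CommSemiring S]
    (e : R ≃+* S) (a : R) :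
    (∃ (t : ℕ) (g : Fin t → R), a = ∑ k, g k ^ 2) ↔
      ∃ (t : ℕ) (g : Fin t → S), e a = ∑ k, g k ^ 2 := by
  constructor
  · rintro ⟨t, g, rfl⟩
    exact ⟨t, e ∘ g, by simp⟩
  · rintro ⟨t, g, hg⟩
    exact ⟨t, e.symm ∘ g, e.injective (by simp [hg])⟩

/-- A symmetric polynomial matrix F ∈ 𝕊^p[x] is an SOS matrix iff the scalar polynomial
yᵀF(x)y in the variables (x,y) ∈ ℝ^{n+p} is a sum of squares of polynomials. -/
theorem stmt_4 {n p : ℕ} (F : Matrix (Fin p) (Fin p) (MvPolynomial (Fin n) ℝ))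
    (hsym : F.IsSymm) :
    (∃ (s : ℕ) (R : Matrix (Fin s) (Fin p) (MvPolynomial (Fin n) ℝ)), F = Rᵀ * R) ↔
      ∃ (t : ℕ) (g : Fin t → MvPolynomial (Fin n ⊕ Fin p) ℝ),
        (∑ i : Fin p, ∑ j : Fin p,
            X (Sum.inr i) * X (Sum.inr j) * MvPolynomial.rename Sum.inl (F i j)) =
          ∑ k, (g k) ^ 2 := by
  let e := (renameEquiv ℝ (Equiv.sumComm (Fin n) (Fin p))).trans (sumAlgEquiv ℝ (Fin p) (Fin n))
  have he_rename : ∀ q, e (rename Sum.inl q) = C q := fun q ↦ by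
    simp only [e, AlgEquiv.trans_apply, renameEquiv_apply, rename_rename]
    exact congrArg (· q) (sumAlgEquiv_comp_rename_inr ℝ (Fin p) (Fin n))
  have he_X : ∀ i, e (X (Sum.inr i)) = X i := fun i ↦ by simp [e]
  have he : e (∑ i, ∑ j, X (Sum.inr i) * X (Sum.inr j) * rename Sum.inl (F i j)) =
      F.quadraticPoly := by
    simp only [quadraticPoly, map_sum, map_mul, he_X, he_rename]
  rw [e.toRingEquiv.exists_eq_sum_sq_iff, AlgEquiv.coe_ringEquiv, he]
  exact exists_eq_transpose_mul_self_iff hsym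
end

section
/- Let A be a symmetric p×p matrix with sparsity pattern given by a chordal graph G on vertices {1,...,p} whose maximal cliques are C₁,...,C_t. Then A is positive semidefinite if and only if there exist positive semidefinite matrices A_i of size |C_i| such that A = Σ_{i=1}^t E_{C_i}ᵀ A_i E_{C_i}, where E_{C_i} is the 0-1 matrix extracting the rows indexed by C_i. -/
open Matrix

/-- A graph is chordal if every cycle of length at least four has a chord, i.e. an edge of
the graph joining two vertices of the cycle that is not an edge of the cycle. -/
def IsChordal {V : Type*} (G : SimpleGraph V) : Prop :=
  ∀ (v : V) (w : G.Walk v v), w.IsCycle → 4 ≤ w.length →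
    ∃ a b, a ∈ w.support ∧ b ∈ w.support ∧ G.Adj a b ∧ s(a, b) ∉ w.edges

/-- A maximal clique: a clique not strictly contained in another clique. -/
def IsMaxClique {V : Type*} (G : SimpleGraph V) (s : Set V) : Prop :=
  G.IsClique s ∧ ∀ t : Set V, G.IsClique t → s ⊆ t → s = t

variable {p : ℕ} (G : SimpleGraph (Fin p))

/-- reachability within a vertex set `W` -/
def AuxConn (W : Finset (Fin p)) (x y : Fin p) : Prop :=
  ∃ w : G.Walk x y, ∀ z ∈ w.support, z ∈ W

variable {G}

lemma auxConn_mem_left {W : Finset (Fin p)} {x y : Fin p} (h : AuxConn G W x y) : x ∈ W := by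
  obtain ⟨w, hw⟩ := h; exact hw _ w.start_mem_support

lemma auxConn_mem_right {W : Finset (Fin p)} {x y : Fin p} (h : AuxConn G W x y) : y ∈ W := by
  obtain ⟨w, hw⟩ := h; exact hw _ w.end_mem_support

lemma auxConn_refl {W : Finset (Fin p)} {x : Fin p} (hx : x ∈ W) : AuxConn G W x x :=
  ⟨SimpleGraph.Walk.nil, by simp [hx]⟩

lemma auxConn_symm {W : Finset (Fin p)} {x y : Fin p} (h : AuxConn G W x y) : AuxConn G W y x := by
  obtain ⟨w, hw⟩ := h
  exact ⟨w.reverse, by intro z hz; rw [SimpleGraph.Walk.support_reverse, List.mem_reverse] at hz; exact hw z hz⟩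

lemma auxConn_trans {W : Finset (Fin p)} {x y z : Fin p} (h : AuxConn G W x y)
    (h' : AuxConn G W y z) : AuxConn G W x z := by
  obtain ⟨w, hw⟩ := h; obtain ⟨w', hw'⟩ := h'
  refine ⟨w.append w', ?_⟩
  intro u hu
  rw [SimpleGraph.Walk.support_append, List.mem_append] at hu
  rcases hu with hu | hu
  · exact hw u hu
  · exact hw' u (List.mem_of_mem_tail hu)

lemma auxConn_adj {W : Finset (Fin p)} {x y z : Fin p} (h : AuxConn G W x y)
    (hyz : G.Adj y z) (hz : z ∈ W) : AuxConn G W x z := by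
  refine auxConn_trans h ⟨SimpleGraph.Walk.cons hyz SimpleGraph.Walk.nil, ?_⟩
  intro u hu
  simp only [SimpleGraph.Walk.support_cons, SimpleGraph.Walk.support_nil, List.mem_cons,
    List.mem_singleton] at hu
  rcases hu with hu | hu
  · subst hu; exact auxConn_mem_right h
  · rcases hu with hu | hu
    · subst hu; exact hz
    · simp at hu

lemma length_one_edges {a b : Fin p} (w : G.Walk a b) (h : w.length = 1) :
    w.edges = [s(a, b)] := by
  cases w with
  | nil => simp at h
  | cons h' w' =>
    rw [SimpleGraph.Walk.length_cons] at h
    have h0 : w'.length = 0 := by omega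
    have := SimpleGraph.Walk.eq_of_length_eq_zero h0
    subst this
    have : w' = SimpleGraph.Walk.nil := by
      cases w' with
      | nil => rfl
      | cons _ _ => simp at h
    subst this
    simp

lemma aux_shortcut {x y u v : Fin p} (P : G.Walk x y) (hu : u ∈ P.support) (hv : v ∈ P.support)
    (huv : G.Adj u v) (he : s(u, v) ∉ P.edges) :
    ∃ Q : G.Walk x y, Q.length < P.length ∧ ∀ z ∈ Q.support, z ∈ P.support := by
  classical
  by_cases hv2 : v ∈ (P.takeUntil u hu).support
  · -- v occurs in the prefix before u
    set P1 := P.takeUntil u hu with hP1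
    set P2 := P.dropUntil u hu with hP2
    have hlenP : P1.length + P2.length = P.length := by
      rw [← SimpleGraph.Walk.length_append, SimpleGraph.Walk.take_spec]
    have hsplit : (P1.takeUntil v hv2).length + (P1.dropUntil v hv2).length = P1.length := by
      rw [← SimpleGraph.Walk.length_append, SimpleGraph.Walk.take_spec]
    have hd1 : (P1.dropUntil v hv2).length ≠ 0 := by
      intro h0
      exact huv.ne' (SimpleGraph.Walk.eq_of_length_eq_zero h0)
    have hd2 : (P1.dropUntil v hv2).length ≠ 1 := by
      intro h1
      have := length_one_edges _ h1
      have hmem : s(v, u) ∈ P1.edges := by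
        have := (SimpleGraph.Walk.edges_dropUntil_subset P1 hv2)
        rw [‹(P1.dropUntil v hv2).edges = [s(v,u)]›] at this
        exact this (List.mem_singleton_self _)
      have : s(v, u) ∈ P.edges := SimpleGraph.Walk.edges_takeUntil_subset P hu hmem
      rw [Sym2.eq_swap] at this
      exact he this
    have hd : 2 ≤ (P1.dropUntil v hv2).length := by omega
    refine ⟨(P1.takeUntil v hv2).append (SimpleGraph.Walk.cons huv.symm P2), ?_, ?_⟩
    · rw [SimpleGraph.Walk.length_append, SimpleGraph.Walk.length_cons]
      omega
    · intro z hz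
      rw [SimpleGraph.Walk.support_append, List.mem_append] at hz
      rcases hz with hz | hz
      · exact SimpleGraph.Walk.support_takeUntil_subset P hu
          (SimpleGraph.Walk.support_takeUntil_subset P1 hv2 hz)
      · simp only [SimpleGraph.Walk.support_cons, List.tail_cons] at hz
        exact SimpleGraph.Walk.support_dropUntil_subset P hu hz
  · -- v occurs after u
    set P1 := P.takeUntil u hu with hP1
    set P2 := P.dropUntil u hu with hP2
    have hv3 : v ∈ P2.support := by
      have : v ∈ P1.support ++ P2.support.tail := by
        rw [← SimpleGraph.Walk.support_append, SimpleGraph.Walk.take_spec]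
        exact hv
      rw [List.mem_append] at this
      rcases this with h | h
      · exact absurd h hv2
      · exact List.mem_of_mem_tail h
    have hlenP : P1.length + P2.length = P.length := by
      rw [← SimpleGraph.Walk.length_append, SimpleGraph.Walk.take_spec]
    have hsplit : (P2.takeUntil v hv3).length + (P2.dropUntil v hv3).length = P2.length := by
      rw [← SimpleGraph.Walk.length_append, SimpleGraph.Walk.take_spec]
    have hd1 : (P2.takeUntil v hv3).length ≠ 0 := by
      intro h0
      exact huv.ne (SimpleGraph.Walk.eq_of_length_eq_zero h0)
    have hd2 : (P2.takeUntil v hv3).length ≠ 1 := by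
      intro h1
      have := length_one_edges _ h1
      have hmem : s(u, v) ∈ P2.edges := by
        have := (SimpleGraph.Walk.edges_takeUntil_subset P2 hv3)
        rw [‹(P2.takeUntil v hv3).edges = [s(u,v)]›] at this
        exact this (List.mem_singleton_self _)
      exact he (SimpleGraph.Walk.edges_dropUntil_subset P hu hmem)
    refine ⟨P1.append (SimpleGraph.Walk.cons huv (P2.dropUntil v hv3)), ?_, ?_⟩
    · rw [SimpleGraph.Walk.length_append, SimpleGraph.Walk.length_cons]
      omega
    · intro z hz
      rw [SimpleGraph.Walk.support_append, List.mem_append] at hz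
      rcases hz with hz | hz
      · exact SimpleGraph.Walk.support_takeUntil_subset P hu hz
      · simp only [SimpleGraph.Walk.support_cons, List.tail_cons] at hz
        exact SimpleGraph.Walk.support_dropUntil_subset P hu
          (SimpleGraph.Walk.support_dropUntil_subset P2 hv3 hz)

lemma min_path {t t' : Fin p} (hne : t ≠ t') (hnadj : ¬G.Adj t t') (W : Finset (Fin p))
    (hex : ∃ P : G.Walk t t', ∀ z ∈ P.support, z = t ∨ z = t' ∨ z ∈ W) :
    ∃ P : G.Walk t t', P.IsPath ∧ 2 ≤ P.length ∧
      (∀ z ∈ P.support, z = t ∨ z = t' ∨ z ∈ W) ∧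
      (∀ u v, u ∈ P.support → v ∈ P.support → G.Adj u v → s(u, v) ∈ P.edges) := by
  classical
  have hn : ∃ n : ℕ, ∃ P : G.Walk t t',
      P.length = n ∧ ∀ z ∈ P.support, z = t ∨ z = t' ∨ z ∈ W := by
    obtain ⟨P, hP⟩ := hex
    exact ⟨P.length, P, rfl, hP⟩
  obtain ⟨P0, hP0len, hP0sup⟩ := Nat.find_spec hn
  have hmin : ∀ (Q : G.Walk t t'), (∀ z ∈ Q.support, z = t ∨ z = t' ∨ z ∈ W) →
      Nat.find hn ≤ Q.length := by
    intro Q hQ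
    exact Nat.find_min' hn ⟨Q, rfl, hQ⟩
  -- take the bypass: a path, no longer, same support constraint
  refine ⟨P0.bypass, P0.bypass_isPath, ?_, ?_, ?_⟩
  · -- length ≥ 2
    rcases Nat.lt_or_ge P0.bypass.length 2 with h | h
    · interval_cases h2 : P0.bypass.length
      · exact absurd (SimpleGraph.Walk.eq_of_length_eq_zero h2) hne
      · have := length_one_edges _ h2
        have : s(t, t') ∈ P0.bypass.edges := by rw [this]; exact List.mem_singleton_self _
        exact absurd (P0.bypass.adj_of_mem_edges this) hnadj
    · exact h
  · intro z hz
    exact hP0sup z (P0.support_bypass_subset hz)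
  · intro u v hu hv huv
    by_contra hne'
    obtain ⟨Q, hQlen, hQsup⟩ := aux_shortcut P0.bypass hu hv huv hne'
    have h1 : Nat.find hn ≤ Q.length := by
      refine hmin Q ?_
      intro z hz
      exact hP0sup z (P0.support_bypass_subset (hQsup z hz))
    have h2 : P0.bypass.length ≤ P0.length := P0.length_bypass_le
    omega

lemma clique_sep (hch : IsChordal G) {t t' : Fin p} (hne : t ≠ t')
    (Wa Wb : Finset (Fin p))
    (hdisj : ∀ z, z ∈ Wa → z ∈ Wb → False)
    (hta : t ∉ Wa) (htb : t ∉ Wb) (ht'a : t' ∉ Wa) (ht'b : t' ∉ Wb)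
    (hnoedge : ∀ x y, x ∈ Wa → y ∈ Wb → ¬G.Adj x y)
    (hexa : ∃ P : G.Walk t t', ∀ z ∈ P.support, z = t ∨ z = t' ∨ z ∈ Wa)
    (hexb : ∃ P : G.Walk t' t, ∀ z ∈ P.support, z = t' ∨ z = t ∨ z ∈ Wb) :
    G.Adj t t' := by
  classical
  by_contra hnadj
  obtain ⟨Pa, hPaPath, hPalen, hPasup, hPachord⟩ := min_path hne hnadj Wa hexa
  obtain ⟨Pb, hPbPath, hPblen, hPbsup, hPbchord⟩ :=
    min_path hne.symm (fun h => hnadj h.symm) Wb hexb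
  set Cc : G.Walk t t := Pa.append Pb with hCc
  have hCsup : ∀ z ∈ Cc.support, z ∈ Pa.support ∨ z ∈ Pb.support := by
    intro z hz
    rw [hCc, SimpleGraph.Walk.support_append, List.mem_append] at hz
    exact hz.imp id List.mem_of_mem_tail
  have hCedges : Cc.edges = Pa.edges ++ Pb.edges := SimpleGraph.Walk.edges_append _ _
  -- support facts
  have hPasup' : ∀ z, z ∈ Pa.support → z ≠ t → z ≠ t' → z ∈ Wa := by
    intro z hz h1 h2
    rcases hPasup z hz with h | h | h
    · exact absurd h h1
    · exact absurd h h2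
    · exact h
  have hPbsup' : ∀ z, z ∈ Pb.support → z ≠ t → z ≠ t' → z ∈ Wb := by
    intro z hz h1 h2
    rcases hPbsup z hz with h | h | h
    · exact absurd h h2
    · exact absurd h h1
    · exact h
  -- C is a cycle
  have hcyc : Cc.IsCycle := by
    constructor
    · constructor
      · -- trail
        rw [hCc]
        constructor
        rw [SimpleGraph.Walk.edges_append]
        rw [List.nodup_append]
        refine ⟨hPaPath.isTrail.edges_nodup, hPbPath.isTrail.edges_nodup, ?_⟩
        intro e hea e' heb hee
        rw [← hee] at heb
        clear hee
        induction e with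
        | h x y =>
          have hadjxy : G.Adj x y := Pa.adj_of_mem_edges hea
          have hxa : x ∈ Pa.support := Pa.fst_mem_support_of_mem_edges hea
          have hya : y ∈ Pa.support := Pa.snd_mem_support_of_mem_edges hea
          have hxb : x ∈ Pb.support := Pb.fst_mem_support_of_mem_edges heb
          have hyb : y ∈ Pb.support := Pb.snd_mem_support_of_mem_edges heb
          have hx : x = t ∨ x = t' := by
            by_contra hx
            push_neg at hx
            exact hdisj x (hPasup' x hxa hx.1 hx.2) (hPbsup' x hxb hx.1 hx.2)
          have hy : y = t ∨ y = t' := by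
            by_contra hy
            push_neg at hy
            exact hdisj y (hPasup' y hya hy.1 hy.2) (hPbsup' y hyb hy.1 hy.2)
          rcases hx with rfl | rfl <;> rcases hy with rfl | rfl
          · exact hadjxy.ne rfl
          · exact hnadj hadjxy
          · exact hnadj hadjxy.symm
          · exact hadjxy.ne rfl
      · -- ne nil
        intro h
        have : Cc.length = 0 := by rw [h]; rfl
        rw [hCc, SimpleGraph.Walk.length_append] at this
        omega
    · -- support tail nodup
      have hsupp : Cc.support.tail = Pa.support.tail ++ Pb.support.tail := by
        rw [hCc, SimpleGraph.Walk.support_append]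
        rw [Pa.support_eq_cons]
        rfl
      rw [hsupp, List.nodup_append]
      have hna : Pa.support.Nodup := hPaPath.support_nodup
      have hnb : Pb.support.Nodup := hPbPath.support_nodup
      have hta' : t ∉ Pa.support.tail := by
        have := hna
        rw [Pa.support_eq_cons, List.nodup_cons] at this
        exact this.1
      have ht'b' : t' ∉ Pb.support.tail := by
        have := hnb
        rw [Pb.support_eq_cons, List.nodup_cons] at this
        exact this.1
      refine ⟨(List.Nodup.of_cons (Pa.support_eq_cons ▸ hna)), ?_, ?_⟩
      · exact (List.Nodup.of_cons (Pb.support_eq_cons ▸ hnb))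
      · intro z hz1 z' hz2 hzz
        subst hzz
        have hz1' : z ∈ Pa.support := List.mem_of_mem_tail hz1
        have hz2' : z ∈ Pb.support := List.mem_of_mem_tail hz2
        have hznt : z ≠ t := fun h => hta' (h ▸ hz1)
        have hznt' : z ≠ t' := fun h => ht'b' (h ▸ hz2)
        exact hdisj z (hPasup' z hz1' hznt hznt') (hPbsup' z hz2' hznt hznt')
  have hlen4 : 4 ≤ Cc.length := by
    rw [hCc, SimpleGraph.Walk.length_append]; omega
  obtain ⟨a, b, ha, hb, hadj, hchordne⟩ := hch t Cc hcyc hlen4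
  have htPb : t ∈ Pb.support := Pb.end_mem_support
  have ht'Pb : t' ∈ Pb.support := Pb.start_mem_support
  have htPa : t ∈ Pa.support := Pa.start_mem_support
  have ht'Pa : t' ∈ Pa.support := Pa.end_mem_support
  rcases hCsup a ha with haP | haP <;> rcases hCsup b hb with hbP | hbP
  · exact hchordne (hCedges ▸ List.mem_append_left _ (hPachord a b haP hbP hadj))
  · -- a in Pa, b in Pb
    by_cases hbPa : b ∈ Pa.support
    · exact hchordne (hCedges ▸ List.mem_append_left _ (hPachord a b haP hbPa hadj))
    · by_cases haPb : a ∈ Pb.support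
      · exact hchordne (hCedges ▸ List.mem_append_right _ (hPbchord a b haPb hbP hadj))
      · have haWa : a ∈ Wa := hPasup' a haP (fun h => haPb (h ▸ htPb)) (fun h => haPb (h ▸ ht'Pb))
        have hbWb : b ∈ Wb := hPbsup' b hbP (fun h => hbPa (h ▸ htPa)) (fun h => hbPa (h ▸ ht'Pa))
        exact hnoedge a b haWa hbWb hadj
  · -- a in Pb, b in Pa
    by_cases haPa : a ∈ Pa.support
    · exact hchordne (hCedges ▸ List.mem_append_left _ (hPachord a b haPa hbP hadj))
    · by_cases hbPb : b ∈ Pb.support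
      · exact hchordne (hCedges ▸ List.mem_append_right _ (hPbchord a b haP hbPb hadj))
      · have hbWa : b ∈ Wa := hPasup' b hbP (fun h => hbPb (h ▸ htPb)) (fun h => hbPb (h ▸ ht'Pb))
        have haWb : a ∈ Wb := hPbsup' a haP (fun h => haPa (h ▸ htPa)) (fun h => haPa (h ▸ ht'Pa))
        exact hnoedge b a hbWa haWb hadj.symm
  · exact hchordne (hCedges ▸ List.mem_append_right _ (hPbchord a b haP hbP hadj))

lemma reach_aux {W : Finset (Fin p)} {a c : Fin p} (w : G.Walk a c)
    (hcount : w.support.count c = 1)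
    (hsupp : ∀ z ∈ w.support, z = c ∨ z ∈ W) :
    ∀ z ∈ w.support, z = c ∨ (z ∈ W ∧ AuxConn G W a z) := by
  classical
  intro z hz
  by_cases hzc : z = c
  · exact Or.inl hzc
  · refine Or.inr ⟨(hsupp z hz).resolve_left hzc, ?_⟩
    set tak := w.takeUntil z hz with htak
    have hcnot : c ∉ tak.support := by
      have hdrop : c ∈ (w.dropUntil z hz).support.tail := by
        have h1 : c ∈ (w.dropUntil z hz).support := SimpleGraph.Walk.end_mem_support _
        rw [(w.dropUntil z hz).support_eq_cons, List.mem_cons] at h1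
        rcases h1 with h1 | h1
        · exact absurd h1.symm hzc
        · exact h1
      have hsplit : w.support = tak.support ++ (w.dropUntil z hz).support.tail := by
        rw [htak, ← SimpleGraph.Walk.support_append, SimpleGraph.Walk.take_spec]
      intro hc
      have h1 : 1 ≤ tak.support.count c := List.one_le_count_iff.mpr hc
      have h2 : 1 ≤ (w.dropUntil z hz).support.tail.count c := List.one_le_count_iff.mpr hdrop
      rw [hsplit, List.count_append] at hcount
      omega
    refine ⟨tak, ?_⟩
    intro y hy
    rcases hsupp y (SimpleGraph.Walk.support_takeUntil_subset w hz hy) with h | h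
    · exact absurd (h ▸ hy) hcnot
    · exact h

def AuxSimp (G : SimpleGraph (Fin p)) (S : Finset (Fin p)) (v : Fin p) : Prop :=
  ∀ ⦃x y : Fin p⦄, x ∈ S → y ∈ S → G.Adj v x → G.Adj v y → x ≠ y → G.Adj x y

lemma dirac (hch : IsChordal G) :
    ∀ (n : ℕ) (S : Finset (Fin p)), S.card ≤ n → S.Nonempty →
      ∃ v ∈ S, AuxSimp G S v ∧
        ((∀ x ∈ S, ∀ y ∈ S, x ≠ y → G.Adj x y) ∨
          ∃ w ∈ S, w ≠ v ∧ ¬G.Adj v w ∧ AuxSimp G S w) := by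
  intro n
  induction n with
  | zero =>
    intro S hcard hne
    obtain ⟨v, hv⟩ := hne
    have := Finset.card_pos.mpr ⟨v, hv⟩
    omega
  | succ n IH =>
    intro S hcard hne
    classical
    by_cases hcomp : ∀ x ∈ S, ∀ y ∈ S, x ≠ y → G.Adj x y
    · obtain ⟨v, hv⟩ := hne
      exact ⟨v, hv, fun x y hx hy _ _ hxy => hcomp x hx y hy hxy, Or.inl hcomp⟩
    · push_neg at hcomp
      obtain ⟨a, ha, b, hb, hab, hnadj⟩ := hcomp
      set 𝒯 := ((S \ {a, b}).powerset).filter (fun T => ¬AuxConn G (S \ T) a b) with h𝒯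
      have hT0 : S \ {a, b} ∈ 𝒯 := by
        rw [h𝒯, Finset.mem_filter]
        refine ⟨Finset.mem_powerset_self _, ?_⟩
        rintro ⟨w, hw⟩
        have hsub : ∀ z ∈ w.support, z = a ∨ z = b := by
          intro z hz
          have := hw z hz
          rw [Finset.sdiff_sdiff_self_left, Finset.mem_inter, Finset.mem_insert,
            Finset.mem_singleton] at this
          exact this.2
        cases w with
        | nil => exact hab rfl
        | @cons _ c _ h w' =>
          have hc : c ∈ (SimpleGraph.Walk.cons h w').support := by
            rw [SimpleGraph.Walk.support_cons]
            exact List.mem_cons_of_mem _ w'.start_mem_support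
          rcases hsub c hc with rfl | rfl
          · exact h.ne rfl
          · exact hnadj h
      obtain ⟨T, hT𝒯, hTmin⟩ := Finset.exists_min_image 𝒯 Finset.card ⟨_, hT0⟩
      have hTsub : T ⊆ S \ {a, b} :=
        Finset.mem_powerset.mp (Finset.mem_filter.mp hT𝒯).1
      have hTnc : ¬AuxConn G (S \ T) a b := (Finset.mem_filter.mp hT𝒯).2
      set W := S \ T with hW
      have hTS : T ⊆ S := hTsub.trans (Finset.sdiff_subset)
      have haT : a ∉ T := fun h => by
        have := hTsub h; rw [Finset.mem_sdiff] at this; exact this.2 (by simp)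
      have hbT : b ∉ T := fun h => by
        have := hTsub h; rw [Finset.mem_sdiff] at this; exact this.2 (by simp)
      have haW : a ∈ W := Finset.mem_sdiff.mpr ⟨ha, haT⟩
      have hbW : b ∈ W := Finset.mem_sdiff.mpr ⟨hb, hbT⟩
      set compa := W.filter (fun z => AuxConn G W a z) with hcompa
      set compb := W.filter (fun z => AuxConn G W b z) with hcompb
      have hacompa : a ∈ compa := Finset.mem_filter.mpr ⟨haW, auxConn_refl haW⟩
      have hbcompb : b ∈ compb := Finset.mem_filter.mpr ⟨hbW, auxConn_refl hbW⟩
      have hcompaW : compa ⊆ W := Finset.filter_subset _ _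
      have hcompbW : compb ⊆ W := Finset.filter_subset _ _
      have hdisjc : ∀ z, z ∈ compa → z ∈ compb → False := by
        intro z h1 h2
        exact hTnc (auxConn_trans (Finset.mem_filter.mp h1).2
          (auxConn_symm (Finset.mem_filter.mp h2).2))
      have hnoedge : ∀ x y, x ∈ compa → y ∈ compb → ¬G.Adj x y := by
        intro x y hx hy hadj
        exact hTnc (auxConn_trans
          (auxConn_adj (Finset.mem_filter.mp hx).2 hadj (hcompbW hy))
          (auxConn_symm (Finset.mem_filter.mp hy).2))
      have hcloseda : ∀ v z, v ∈ compa → z ∈ W → G.Adj v z → z ∈ compa := by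
        intro v z hv hz hadj
        exact Finset.mem_filter.mpr ⟨hz, auxConn_adj (Finset.mem_filter.mp hv).2 hadj hz⟩
      have hclosedb : ∀ v z, v ∈ compb → z ∈ W → G.Adj v z → z ∈ compb := by
        intro v z hv hz hadj
        exact Finset.mem_filter.mpr ⟨hz, auxConn_adj (Finset.mem_filter.mp hv).2 hadj hz⟩
      have hwalks : ∀ s ∈ T,
          (∃ w : G.Walk a s, ∀ z ∈ w.support, z = s ∨ z ∈ compa) ∧
          (∃ w : G.Walk b s, ∀ z ∈ w.support, z = s ∨ z ∈ compb) := by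
        intro s hs
        have h1 : T.erase s ∉ 𝒯 := by
          intro hmem
          have h2 := hTmin _ hmem
          have h3 := Finset.card_erase_lt_of_mem hs
          omega
        have h2 : T.erase s ⊆ S \ {a, b} := (Finset.erase_subset _ _).trans hTsub
        have h3 : AuxConn G (S \ T.erase s) a b := by
          by_contra hn
          exact h1 (Finset.mem_filter.mpr ⟨Finset.mem_powerset.mpr h2, hn⟩)
        obtain ⟨w, hw⟩ := h3
        have hsS : s ∈ w.support := by
          by_contra hns
          apply hTnc
          refine ⟨w, fun z hz => ?_⟩
          have h4 := hw z hz
          rw [Finset.mem_sdiff] at h4 ⊢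
          refine ⟨h4.1, fun hzT => ?_⟩
          exact h4.2 (Finset.mem_erase.mpr ⟨fun h => hns (h ▸ hz), hzT⟩)
        have hWside : ∀ (t0 : Fin p) (wk : G.Walk t0 s), wk.support.count s = 1 →
            (∀ z ∈ wk.support, z ∈ S \ T.erase s) →
            ∀ z ∈ wk.support, z = s ∨ (z ∈ W ∧ AuxConn G W t0 z) := by
          intro t0 wk hcnt hsupp
          apply reach_aux wk hcnt
          intro z hz
          by_cases hzs : z = s
          · exact Or.inl hzs
          · right
            have h4 := hsupp z hz
            rw [Finset.mem_sdiff] at h4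
            rw [hW, Finset.mem_sdiff]
            refine ⟨h4.1, fun hzT => h4.2 (Finset.mem_erase.mpr ⟨hzs, hzT⟩)⟩
        constructor
        · set tk := w.takeUntil s hsS with htk
          have hc := w.count_support_takeUntil_eq_one hsS
          have := hWside a tk hc
            (fun z hz => hw z (SimpleGraph.Walk.support_takeUntil_subset w hsS hz))
          exact ⟨tk, fun z hz => (this z hz).imp id
            (fun h => Finset.mem_filter.mpr ⟨h.1, h.2⟩)⟩
        · have hsS' : s ∈ w.reverse.support := by
            rw [SimpleGraph.Walk.support_reverse, List.mem_reverse]; exact hsS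
          set tk := w.reverse.takeUntil s hsS' with htk
          have hc := w.reverse.count_support_takeUntil_eq_one hsS'
          have := hWside b tk hc
            (fun z hz => by
              have := SimpleGraph.Walk.support_takeUntil_subset w.reverse hsS' hz
              rw [SimpleGraph.Walk.support_reverse, List.mem_reverse] at this
              exact hw z this)
          exact ⟨tk, fun z hz => (this z hz).imp id
            (fun h => Finset.mem_filter.mpr ⟨h.1, h.2⟩)⟩
      have hTclique : ∀ s ∈ T, ∀ s' ∈ T, s ≠ s' → G.Adj s s' := by
        intro s hs s' hs' hss'
        have hsW : s ∉ W := fun h => (Finset.mem_sdiff.mp h).2 hs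
        have hs'W : s' ∉ W := fun h => (Finset.mem_sdiff.mp h).2 hs'
        refine clique_sep hch hss' compa compb hdisjc
          (fun h => hsW (hcompaW h)) (fun h => hsW (hcompbW h))
          (fun h => hs'W (hcompaW h)) (fun h => hs'W (hcompbW h)) hnoedge ?_ ?_
        · obtain ⟨w1, hw1⟩ := (hwalks s hs).1
          obtain ⟨w2, hw2⟩ := (hwalks s' hs').1
          refine ⟨w1.reverse.append w2, fun z hz => ?_⟩
          rw [SimpleGraph.Walk.support_append, List.mem_append] at hz
          rcases hz with hz | hz
          · rw [SimpleGraph.Walk.support_reverse, List.mem_reverse] at hz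
            rcases hw1 z hz with h | h
            · exact Or.inl h
            · exact Or.inr (Or.inr h)
          · rcases hw2 z (List.mem_of_mem_tail hz) with h | h
            · exact Or.inr (Or.inl h)
            · exact Or.inr (Or.inr h)
        · obtain ⟨w1, hw1⟩ := (hwalks s' hs').2
          obtain ⟨w2, hw2⟩ := (hwalks s hs).2
          refine ⟨w1.reverse.append w2, fun z hz => ?_⟩
          rw [SimpleGraph.Walk.support_append, List.mem_append] at hz
          rcases hz with hz | hz
          · rw [SimpleGraph.Walk.support_reverse, List.mem_reverse] at hz
            rcases hw1 z hz with h | h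
            · exact Or.inl h
            · exact Or.inr (Or.inr h)
          · rcases hw2 z (List.mem_of_mem_tail hz) with h | h
            · exact Or.inr (Or.inl h)
            · exact Or.inr (Or.inr h)
      -- helper: extract a simplicial vertex in a component
      have key : ∀ (x0 : Fin p) (compx : Finset (Fin p)), x0 ∈ compx → compx ⊆ W →
          (∀ v z, v ∈ compx → z ∈ W → G.Adj v z → z ∈ compx) →
          (∃ y ∈ S, y ∉ compx ∪ T) →
          ∃ v ∈ compx, AuxSimp G S v := by
        intro x0 compx hx0 hcompxW hclosedx ⟨y, hyS, hyn⟩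
        set S' := compx ∪ T with hS'
        have hS'S : S' ⊆ S := by
          intro z hz
          rcases Finset.mem_union.mp hz with h | h
          · exact (Finset.mem_sdiff.mp (hcompxW h)).1
          · exact hTS h
        have hS'card : S'.card ≤ n := by
          have h1 : S'.card < S.card := Finset.card_lt_card ⟨hS'S, fun h => hyn (h hyS)⟩
          omega
        obtain ⟨v, hv, hvsimp, hvdisj⟩ := IH S' hS'card ⟨x0, Finset.mem_union_left _ hx0⟩
        -- get a simplicial (in S') vertex inside compx
        have hvx : ∃ u ∈ compx, AuxSimp G S' u := by
          rcases hvdisj with hcomp' | ⟨w, hwS', hwv, hnvw, hwsimp⟩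
          · exact ⟨x0, hx0, fun x' y' hx' hy' _ _ hxy =>
              hcomp' x' hx' y' hy' hxy⟩
          · by_cases hvc : v ∈ compx
            · exact ⟨v, hvc, hvsimp⟩
            · by_cases hwc : w ∈ compx
              · exact ⟨w, hwc, hwsimp⟩
              · have hvT : v ∈ T := (Finset.mem_union.mp hv).resolve_left hvc
                have hwT : w ∈ T := (Finset.mem_union.mp hwS').resolve_left hwc
                exact absurd (hTclique v hvT w hwT (Ne.symm hwv)) hnvw
        obtain ⟨u, huc, husimp⟩ := hvx
        refine ⟨u, huc, ?_⟩
        intro x' y' hx' hy' hux huy hxy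
        have hmem : ∀ z ∈ S, G.Adj u z → z ∈ S' := by
          intro z hz hadj
          by_cases hzT : z ∈ T
          · exact Finset.mem_union_right _ hzT
          · exact Finset.mem_union_left _
              (hclosedx u z huc (Finset.mem_sdiff.mpr ⟨hz, hzT⟩) hadj)
        exact husimp (hmem x' hx' hux) (hmem y' hy' huy) hux huy hxy
      obtain ⟨va, hva, hvasimp⟩ := key a compa hacompa hcompaW hcloseda
        ⟨b, hb, fun h => by
          rcases Finset.mem_union.mp h with h | h
          · exact hdisjc b h hbcompb
          · exact hbT h⟩
      obtain ⟨vb, hvb, hvbsimp⟩ := key b compb hbcompb hcompbW hclosedb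
        ⟨a, ha, fun h => by
          rcases Finset.mem_union.mp h with h | h
          · exact hdisjc a hacompa h
          · exact haT h⟩
      refine ⟨va, (Finset.mem_sdiff.mp (hcompaW hva)).1, hvasimp,
        Or.inr ⟨vb, (Finset.mem_sdiff.mp (hcompbW hvb)).1, ?_, hnoedge va vb hva hvb, hvbsimp⟩⟩
      intro h
      exact hdisjc va hva (h ▸ hvb)

section MatrixPart

lemma psd_dot {n : ℕ} {A : Matrix (Fin n) (Fin n) ℝ} (h : A.PosSemidef) (x : Fin n → ℝ) :
    0 ≤ x ⬝ᵥ A *ᵥ x := by simpa using h.dotProduct_mulVec_nonneg x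

lemma herm_symm {n : ℕ} {A : Matrix (Fin n) (Fin n) ℝ} (h : A.IsHermitian) (i j : Fin n) :
    A j i = A i j := by
  have := congrFun (congrFun h j) i
  simpa [Matrix.conjTranspose_apply] using this.symm

lemma herm_transpose_eq {n : ℕ} {A : Matrix (Fin n) (Fin n) ℝ} (h : A.IsHermitian) : Aᵀ = A := by
  ext i j; rw [Matrix.transpose_apply]; exact herm_symm h i j

lemma dot_symm {n : ℕ} {A : Matrix (Fin n) (Fin n) ℝ} (h : A.IsHermitian) (x y : Fin n → ℝ) :
    y ⬝ᵥ A *ᵥ x = x ⬝ᵥ A *ᵥ y := by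
  rw [Matrix.dotProduct_mulVec x A y, ← Matrix.mulVec_transpose, herm_transpose_eq h,
    dotProduct_comm]

lemma cauchy {n : ℕ} {A : Matrix (Fin n) (Fin n) ℝ} (hA : A.PosSemidef) (x y : Fin n → ℝ) :
    (x ⬝ᵥ A *ᵥ y) ^ 2 ≤ (x ⬝ᵥ A *ᵥ x) * (y ⬝ᵥ A *ᵥ y) := by
  set a := x ⬝ᵥ A *ᵥ x with ha
  set c := y ⬝ᵥ A *ᵥ y with hc
  have key : ∀ s : ℝ, 0 ≤ a * (s * s) + (2 * (x ⬝ᵥ A *ᵥ y)) * s + c := by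
    intro s
    have h0 := psd_dot hA (s • x + y)
    have hexp : (s • x + y) ⬝ᵥ A *ᵥ (s • x + y) = a * (s * s) + (2 * (x ⬝ᵥ A *ᵥ y)) * s + c := by
      rw [Matrix.mulVec_add, Matrix.mulVec_smul]
      simp only [dotProduct_add, add_dotProduct, dotProduct_smul,
        smul_dotProduct, smul_eq_mul]
      rw [dot_symm hA.1 x y]
      ring
    linarith [hexp ▸ h0]
  have := discrim_le_zero key
  rw [discrim] at this
  nlinarith [this]

lemma psd_entry_sq {n : ℕ} {A : Matrix (Fin n) (Fin n) ℝ} (hA : A.PosSemidef) (i j : Fin n) :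
    (A i j) ^ 2 ≤ A i i * A j j := by
  have := cauchy hA (Pi.single i 1) (Pi.single j 1)
  simpa [Matrix.mulVec_single, single_dotProduct] using this

lemma psd_diag_nonneg {n : ℕ} {A : Matrix (Fin n) (Fin n) ℝ} (hA : A.PosSemidef) (i : Fin n) :
    0 ≤ A i i := by
  have := psd_dot hA (Pi.single i 1)
  simpa [Matrix.mulVec_single, single_dotProduct] using this

end MatrixPart

def IsMaxClique' {V : Type*} (G : SimpleGraph V) (s : Set V) : Prop :=
  G.IsClique s ∧ ∀ t : Set V, G.IsClique t → s ⊆ t → s = t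

lemma clique_ext {t : ℕ} (C : Fin t → Finset (Fin p))
    (hall : ∀ s : Set (Fin p), IsMaxClique' G s → ∃ i, s = (C i : Set (Fin p)))
    (K : Finset (Fin p)) (hK : G.IsClique (↑K : Set (Fin p))) : ∃ k, K ⊆ C k := by
  classical
  set F := (Finset.univ : Finset (Finset (Fin p))).filter
    (fun u => K ⊆ u ∧ G.IsClique (↑u : Set (Fin p))) with hF
  have hKF : K ∈ F := by
    rw [hF, Finset.mem_filter]
    exact ⟨Finset.mem_univ _, Finset.Subset.refl _, hK⟩
  obtain ⟨u0, hu0F, hu0max⟩ := Finset.exists_max_image F Finset.card ⟨K, hKF⟩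
  have hu0 := (Finset.mem_filter.mp hu0F).2
  have hmaxc : IsMaxClique' G (↑u0 : Set (Fin p)) := by
    refine ⟨hu0.2, fun s hs hsub => ?_⟩
    have hfin : s.Finite := Set.toFinite s
    have h1 : u0 ⊆ hfin.toFinset := by
      intro z hz
      rw [Set.Finite.mem_toFinset]
      exact hsub hz
    have h2 : hfin.toFinset ∈ F := by
      rw [hF, Finset.mem_filter]
      refine ⟨Finset.mem_univ _, hu0.1.trans h1, ?_⟩
      rwa [Set.Finite.coe_toFinset]
    have h3 := hu0max _ h2
    have h4 := Finset.eq_of_subset_of_card_le h1 h3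
    rw [h4, Set.Finite.coe_toFinset]
  obtain ⟨k, hk⟩ := hall _ hmaxc
  refine ⟨k, fun z hz => ?_⟩
  have : (z : Fin p) ∈ (↑u0 : Set (Fin p)) := hu0.1 hz
  rw [hk] at this
  exact_mod_cast this

lemma decomp {t : ℕ} (hch : IsChordal G) (C : Fin t → Finset (Fin p))
    (hall : ∀ s : Set (Fin p), IsMaxClique' G s → ∃ i, s = (C i : Set (Fin p))) :
    ∀ (n : ℕ) (S : Finset (Fin p)), S.card ≤ n →
      ∀ (A : Matrix (Fin p) (Fin p) ℝ), A.PosSemidef →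
        (∀ i j, A i j ≠ 0 → i ∈ S ∧ j ∈ S) →
        (∀ i j, i ≠ j → ¬G.Adj i j → A i j = 0) →
        ∃ D : Fin t → Matrix (Fin p) (Fin p) ℝ,
          (∀ k, (D k).PosSemidef) ∧ (∀ k i j, D k i j ≠ 0 → i ∈ C k ∧ j ∈ C k) ∧
          A = ∑ k, D k := by
  intro n
  induction n with
  | zero =>
    intro S hcard A hA hsupp hsp
    have hS : S = ∅ := Finset.card_eq_zero.mp (Nat.le_zero.mp hcard)
    have hA0 : A = 0 := by
      ext i j
      by_contra h
      have := (hsupp i j h).1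
      rw [hS] at this
      exact absurd this (Finset.notMem_empty i)
    exact ⟨fun _ => 0, fun _ => Matrix.PosSemidef.zero, by simp, by simp [hA0]⟩
  | succ n IH =>
    intro S hcard A hA hsupp hsp
    classical
    rcases Finset.eq_empty_or_nonempty S with hSe | hSn
    · exact IH S (by rw [hSe]; simp) A hA hsupp hsp
    obtain ⟨v, hvS, hvsimp, -⟩ := dirac hch S.card S le_rfl hSn
    have hScard : 1 ≤ S.card := Finset.card_pos.mpr hSn
    have hecard : (S.erase v).card ≤ n := by
      have := Finset.card_erase_of_mem hvS
      omega
    by_cases hv0 : A v v = 0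
    · -- zero row/column, just drop v
      have hcol : ∀ i, A i v = 0 := by
        intro i
        have h2 := psd_entry_sq hA i v
        rw [hv0, mul_zero] at h2
        nlinarith [sq_nonneg (A i v)]
      have hrow : ∀ j, A v j = 0 := fun j => (herm_symm hA.1 j v) ▸ hcol j
      refine IH (S.erase v) hecard A hA ?_ hsp
      intro i j h
      refine ⟨Finset.mem_erase.mpr ⟨fun hiv => h (hiv ▸ hrow j), (hsupp i j h).1⟩,
        Finset.mem_erase.mpr ⟨fun hjv => h (hjv ▸ hcol i), (hsupp i j h).2⟩⟩
    · have hvpos : 0 < A v v := lt_of_le_of_ne (psd_diag_nonneg hA v) (Ne.symm hv0)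
      set a := A v v with ha
      set u : Fin p → ℝ := fun i => A i v with hu
      set R : Matrix (Fin p) (Fin p) ℝ := Matrix.of fun i j => u i * u j / a with hR
      set K := S.filter (fun z => A z v ≠ 0) with hK
      have hKS : K ⊆ S := Finset.filter_subset _ _
      have hvK : v ∈ K := Finset.mem_filter.mpr ⟨hvS, hv0⟩
      have hKadj : ∀ z ∈ K, z ≠ v → G.Adj z v := by
        intro z hz hzv
        by_contra hn
        exact (Finset.mem_filter.mp hz).2 (hsp z v hzv hn)
      have hKclique : G.IsClique (↑K : Set (Fin p)) := by
        rw [SimpleGraph.isClique_iff]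
        intro x hx y hy hxy
        have hx' : x ∈ K := hx
        have hy' : y ∈ K := hy
        by_cases hxv : x = v
        · subst hxv
          exact (hKadj y hy' (fun h => hxy h.symm)).symm
        · by_cases hyv : y = v
          · subst hyv
            exact hKadj x hx' hxv
          · exact hvsimp (hKS hx') (hKS hy') (hKadj x hx' hxv).symm
              (hKadj y hy' hyv).symm hxy
      obtain ⟨k0, hk0⟩ := clique_ext C hall K hKclique
      have hRsupp : ∀ i j, R i j ≠ 0 → i ∈ K ∧ j ∈ K := by
        intro i j h
        rw [hR] at h
        simp only [Matrix.of_apply] at h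
        have hui : u i ≠ 0 := fun h0 => h (by rw [h0]; ring)
        have huj : u j ≠ 0 := fun h0 => h (by rw [h0]; ring)
        exact ⟨Finset.mem_filter.mpr ⟨(hsupp i v hui).1, hui⟩,
          Finset.mem_filter.mpr ⟨(hsupp j v huj).1, huj⟩⟩
      have hRherm : R.IsHermitian := by
        ext i j
        simp only [Matrix.conjTranspose_apply, hR, Matrix.of_apply, star_trivial]
        ring
      have hRq : ∀ x : Fin p → ℝ, x ⬝ᵥ R *ᵥ x = (u ⬝ᵥ x) ^ 2 / a := by
        intro x
        have hmv : R *ᵥ x = ((u ⬝ᵥ x) / a) • u := by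
          funext i
          simp only [Matrix.mulVec, dotProduct, hR, Matrix.of_apply, Pi.smul_apply,
            smul_eq_mul]
          have h1 : ∀ j, u i * u j / a * x j = u j * x j * (u i / a) := fun j => by ring
          simp_rw [h1]
          rw [← Finset.sum_mul]
          ring
        rw [hmv, dotProduct_smul, smul_eq_mul, dotProduct_comm]
        ring
      have hRpsd : R.PosSemidef := by
        refine Matrix.PosSemidef.of_dotProduct_mulVec_nonneg hRherm fun x => ?_
        have := hRq x
        simp only [star_trivial]
        rw [this]
        positivity
      have hAu : A *ᵥ Pi.single v 1 = u := by
        funext i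
        simp [Matrix.mulVec_single, hu]
      have hcs : ∀ x : Fin p → ℝ, (u ⬝ᵥ x) ^ 2 ≤ (x ⬝ᵥ A *ᵥ x) * a := by
        intro x
        have h1 := cauchy hA x (Pi.single v 1)
        rw [hAu] at h1
        have h2 : Pi.single v (1:ℝ) ⬝ᵥ u = a := by
          simp [single_dotProduct, hu, ha]
        rw [h2] at h1
        rwa [dotProduct_comm x u] at h1
      set A' := A - R with hA'
      have hA'psd : A'.PosSemidef := by
        refine Matrix.PosSemidef.of_dotProduct_mulVec_nonneg (hA.1.sub hRherm) fun x => ?_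
        simp only [star_trivial, hA', Matrix.sub_mulVec, dotProduct_sub]
        rw [hRq x]
        rw [sub_nonneg, div_le_iff₀ hvpos]
        exact hcs x
      have huv : u v = a := rfl
      have hA'v : ∀ j, A' v j = 0 := by
        intro j
        simp only [hA', Matrix.sub_apply, hR, Matrix.of_apply]
        rw [huv, mul_div_assoc]
        rw [show (a : ℝ) * (u j / a) = u j by field_simp]
        rw [hu]
        simp only []
        rw [herm_symm hA.1 j v]
        ring
      have hA'v' : ∀ i, A' i v = 0 := by
        intro i
        simp only [hA', Matrix.sub_apply, hR, Matrix.of_apply]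
        rw [huv]
        rw [show (u i : ℝ) * a / a = u i by field_simp]
        simp [hu]
      have hsupp' : ∀ i j, A' i j ≠ 0 → i ∈ S.erase v ∧ j ∈ S.erase v := by
        intro i j h
        have hiv : i ≠ v := fun h0 => h (h0 ▸ hA'v j)
        have hjv : j ≠ v := fun h0 => h (h0 ▸ hA'v' i)
        have h2 : A i j ≠ 0 ∨ R i j ≠ 0 := by
          by_contra hcon
          push_neg at hcon
          simp only [hA', Matrix.sub_apply, hcon.1, hcon.2, sub_zero] at h
          exact h rfl
        rcases h2 with h2 | h2
        · exact ⟨Finset.mem_erase.mpr ⟨hiv, (hsupp i j h2).1⟩,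
            Finset.mem_erase.mpr ⟨hjv, (hsupp i j h2).2⟩⟩
        · obtain ⟨h3, h4⟩ := hRsupp i j h2
          exact ⟨Finset.mem_erase.mpr ⟨hiv, hKS h3⟩, Finset.mem_erase.mpr ⟨hjv, hKS h4⟩⟩
      have hsp' : ∀ i j, i ≠ j → ¬G.Adj i j → A' i j = 0 := by
        intro i j hij hnadj
        have hAij : A i j = 0 := hsp i j hij hnadj
        have hRij : R i j = 0 := by
          by_contra h
          obtain ⟨h3, h4⟩ := hRsupp i j h
          exact hnadj (hKclique h3 h4 hij)
        simp [hA', Matrix.sub_apply, hAij, hRij]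
      obtain ⟨D', hD'psd, hD'supp, hD'sum⟩ := IH (S.erase v) hecard A' hA'psd hsupp' hsp'
      refine ⟨fun k => D' k + if k = k0 then R else 0, ?_, ?_, ?_⟩
      · intro k
        refine (hD'psd k).add ?_
        by_cases hk : k = k0
        · simp [hk, hRpsd]
        · simp [hk, Matrix.PosSemidef.zero]
      · intro k i j h
        have h2 : D' k i j ≠ 0 ∨ (if k = k0 then R else 0) i j ≠ 0 := by
          by_contra hcon
          push_neg at hcon
          simp only [Matrix.add_apply, hcon.1, hcon.2, add_zero] at h
          exact h rfl
        rcases h2 with h2 | h2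
        · exact hD'supp k i j h2
        · by_cases hk : k = k0
          · subst hk
            simp only [if_pos rfl] at h2
            obtain ⟨h3, h4⟩ := hRsupp i j h2
            exact ⟨hk0 h3, hk0 h4⟩
          · simp [hk] at h2
      · rw [Finset.sum_add_distrib, ← hD'sum, Finset.sum_ite_eq' Finset.univ k0]
        simp [hA']

lemma sum_subtype_ite {K : Finset (Fin p)} (f : Fin p → ℝ) (i : Fin p) :
    (∑ a : ↥K, if (a : Fin p) = i then f ↑a else 0) = if i ∈ K then f i else 0 := by
  classical
  rw [Finset.sum_coe_sort K (fun a => if a = i then f a else 0)]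
  exact Finset.sum_ite_eq' K i f

lemma Emat {K : Finset (Fin p)} (M : Matrix (Fin p) (Fin p) ℝ)
    (hM : ∀ i j, M i j ≠ 0 → i ∈ K ∧ j ∈ K) :
    (Matrix.of fun (a : ↥K) (b : Fin p) => if (a : Fin p) = b then (1 : ℝ) else 0)ᵀ *
        (M.submatrix (fun a : ↥K => (a : Fin p)) (fun a : ↥K => (a : Fin p))) *
      (Matrix.of fun (a : ↥K) (b : Fin p) => if (a : Fin p) = b then (1 : ℝ) else 0) = M := by
  classical
  ext i j
  simp only [Matrix.mul_apply, Matrix.transpose_apply, Matrix.of_apply, Matrix.submatrix_apply,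
    ite_mul, one_mul, zero_mul, mul_ite, mul_one, mul_zero]
  have h1 : ∀ b : ↥K, (∑ a : ↥K, if (a : Fin p) = i then M ↑a ↑b else 0)
      = if i ∈ K then M i ↑b else 0 := fun b => sum_subtype_ite (fun a => M a ↑b) i
  simp_rw [h1]
  rw [sum_subtype_ite (fun b => if i ∈ K then M i b else 0) j]
  by_cases hi : i ∈ K <;> by_cases hj : j ∈ K <;> simp [hi, hj]
  · by_contra h; exact hj (hM i j (fun h0 => h h0.symm)).2
  · by_contra h; exact hi (hM i j (fun h0 => h h0.symm)).1
  · by_contra h; exact hi (hM i j (fun h0 => h h0.symm)).1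


/-- (Agler–Helton–McCullough–Rodman.) Let A ∈ 𝕊^p have chordal sparsity pattern G with
maximal cliques C₁,…,C_t. Then A ⪰ 0 iff A = Σᵢ E_{Cᵢ}ᵀ Aᵢ E_{Cᵢ} for PSD matrices Aᵢ of
size |Cᵢ|. -/
theorem stmt_6 {p t : ℕ} (G : SimpleGraph (Fin p))
    (hchordal : IsChordal G)
    (C : Fin t → Finset (Fin p))
    (hmax : ∀ i, IsMaxClique G (C i : Set (Fin p)))
    (hall : ∀ s : Set (Fin p), IsMaxClique G s → ∃ i, s = (C i : Set (Fin p)))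
    (A : Matrix (Fin p) (Fin p) ℝ) (hAsymm : A.IsSymm)
    (hsp : ∀ i j, i ≠ j → ¬ G.Adj i j → A i j = 0) :
    A.PosSemidef ↔
      ∃ B : (i : Fin t) → Matrix ↥(C i) ↥(C i) ℝ,
        (∀ i, (B i).PosSemidef) ∧
          A = ∑ i, (Matrix.of fun (a : ↥(C i)) (b : Fin p) =>
                  if (a : Fin p) = b then (1 : ℝ) else 0)ᵀ * B i *
                (Matrix.of fun (a : ↥(C i)) (b : Fin p) =>
                  if (a : Fin p) = b then (1 : ℝ) else 0) := by
  constructor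
  · intro hA
    obtain ⟨D, hDpsd, hDsupp, hDsum⟩ := decomp hchordal C
      (fun s hs => hall s ⟨hs.1, hs.2⟩) (Finset.univ.card) Finset.univ le_rfl A hA
      (fun i j _ => ⟨Finset.mem_univ i, Finset.mem_univ j⟩) hsp
    refine ⟨fun k => (D k).submatrix (fun a : ↥(C k) => (a : Fin p))
      (fun a : ↥(C k) => (a : Fin p)), fun k => (hDpsd k).submatrix _, ?_⟩
    rw [hDsum]
    refine Finset.sum_congr rfl fun k _ => ?_
    exact (Emat (D k) (hDsupp k)).symm
  · rintro ⟨B, hB, rfl⟩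
    have hterm : ∀ k : Fin t,
        ((Matrix.of fun (a : ↥(C k)) (b : Fin p) =>
            if (a : Fin p) = b then (1 : ℝ) else 0)ᵀ * B k *
          (Matrix.of fun (a : ↥(C k)) (b : Fin p) =>
            if (a : Fin p) = b then (1 : ℝ) else 0)).PosSemidef := by
      intro k
      have h1 := (hB k).mul_mul_conjTranspose_same
        (Matrix.of fun (a : ↥(C k)) (b : Fin p) =>
          if (a : Fin p) = b then (1 : ℝ) else 0)ᵀ
      have h2 : ((Matrix.of fun (a : ↥(C k)) (b : Fin p) =>
          if (a : Fin p) = b then (1 : ℝ) else 0)ᵀ)ᴴ =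
          (Matrix.of fun (a : ↥(C k)) (b : Fin p) =>
            if (a : Fin p) = b then (1 : ℝ) else 0) := by
        ext x y
        simp [Matrix.conjTranspose_apply]
      rwa [h2] at h1
    exact Finset.sum_induction _ _ (fun _ _ h1 h2 => h1.add h2) Matrix.PosSemidef.zero
      (fun k _ => hterm k)
end

section
/- Let F(x₁,x₂) be the 2×2 symmetric polynomial matrix with F₁₁ = 2(x₁−1)² + (x₂−1)² + (x₂−2)², F₁₂ = F₂₁ = 3 − 2x₂, F₂₂ = 2(x₁−2)² + (x₂−1)² + (x₂−2)². Then for all (x₁,x₂) ∈ ℝ², the matrix F(x₁,x₂) − (1/2)I₂ is positive semidefinite. -/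
open Matrix

/-- For all (x₁,x₂) ∈ ℝ², the matrix F(x₁,x₂) − (1/2)·I₂ is positive semidefinite, where
F₁₁ = 2(x₁−1)² + (x₂−1)² + (x₂−2)², F₁₂ = F₂₁ = 3 − 2x₂,
F₂₂ = 2(x₁−2)² + (x₂−1)² + (x₂−2)². -/
theorem stmt_9 (x₁ x₂ : ℝ) :
    ((!![2*(x₁-1)^2 + (x₂-1)^2 + (x₂-2)^2, 3 - 2*x₂;
         3 - 2*x₂, 2*(x₁-2)^2 + (x₂-1)^2 + (x₂-2)^2] : Matrix (Fin 2) (Fin 2) ℝ)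
        - (1/2 : ℝ) • (1 : Matrix (Fin 2) (Fin 2) ℝ)).PosSemidef := by
  rw [Matrix.posSemidef_iff_dotProduct_mulVec]
  constructor
  · ext i j
    fin_cases i <;> fin_cases j <;>
      simp [Matrix.one_apply, Matrix.conjTranspose_apply] <;> ring
  · intro y
    have h := sq_nonneg (y 0)
    have h2 := sq_nonneg (y 1)
    simp only [dotProduct, Matrix.mulVec, Fin.sum_univ_two, Matrix.sub_apply,
      Matrix.smul_apply, Matrix.one_apply, Matrix.cons_val', Matrix.cons_val_zero,
      Matrix.cons_val_one, Matrix.head_cons, Matrix.head_fin_const, Matrix.empty_val',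
      Matrix.cons_val_fin_one, Matrix.of_apply, RCLike.star_def, starRingEnd_apply, star_trivial,
      smul_eq_mul]
    norm_num
    set a := y 0
    set b := y 1
    set u := x₁ - 1 with hu
    set t := x₂ - 3/2 with ht
    have hQ : a * ((2 * (x₁ - 1) ^ 2 + (x₂ - 1) ^ 2 + (x₂ - 2) ^ 2 - 1 / 2) * a
          + (3 - 2 * x₂) * b)
        + b * ((3 - 2 * x₂) * a + (2 * (x₁ - 2) ^ 2 + (x₂ - 1) ^ 2 + (x₂ - 2) ^ 2 - 1 / 2) * b)
        = 2*u^2*a^2 + 2*t^2*a^2 - 4*t*a*b + 2*(u-1)^2*b^2 + 2*t^2*b^2 := by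
      rw [hu, ht]; ring
    rw [hQ]
    rcases eq_or_lt_of_le (by positivity : (0:ℝ) ≤ 2*u^2 + 2*t^2) with hA | hA
    · have hu0 : u = 0 := by nlinarith [sq_nonneg u, sq_nonneg t]
      have ht0 : t = 0 := by nlinarith [sq_nonneg u, sq_nonneg t]
      rw [hu0, ht0]
      nlinarith [sq_nonneg b]
    · have key : (2*u^2 + 2*t^2) * (2*u^2*a^2 + 2*t^2*a^2 - 4*t*a*b + 2*(u-1)^2*b^2 + 2*t^2*b^2)
          = ((2*u^2 + 2*t^2)*a - 2*t*b)^2 + 4*(u*(u-1) + t^2)^2 * b^2 := by ring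
      have h1 : 0 ≤ (2*u^2 + 2*t^2) * (2*u^2*a^2 + 2*t^2*a^2 - 4*t*a*b + 2*(u-1)^2*b^2 + 2*t^2*b^2) := by
        rw [key]; positivity
      have h2 : (2*u^2 + 2*t^2) * 0 ≤ (2*u^2 + 2*t^2) * (2*u^2*a^2 + 2*t^2*a^2 - 4*t*a*b + 2*(u-1)^2*b^2 + 2*t^2*b^2) := by
        simpa using h1
      simpa using le_of_mul_le_mul_left h2 hA
end

section
/- Let F be the 2×2 polynomial matrix with F₁₁ = 2(x₁−1)² + (x₂−1)² + (x₂−2)², F₁₂ = 3 − 2x₂, F₂₂ = 2(x₁−2)² + (x₂−1)² + (x₂−2)². Then the minimum eigenvalue of F(3/2, 1) equals 1/2, and hence inf over K = {x ∈ ℝ² : x₁² ≤ 4, x₂² ≤ 4} of λ_min(F(x)) equals 1/2. -/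
/-!
Write `s = x₁ - 3/2` and `t = (x₂ - 3/2)²`. The diagonal entries of `F(x) - ½I` are
`2(s + ½)² + 2t` and `2(s - ½)² + 2t`, and its determinant is `4(s² + t - ¼)²`, so
`F(x) ⪰ ½I` everywhere and every eigenvalue of `F(x)` is at least `½`. The bound is attained
at `(3/2, 1) ∈ K`, where `F = !![3/2, 1; 1, 3/2]` has eigenvalues `½` and `5/2`.
-/

open Matrix

/-- The smallest eigenvalue of a real square matrix: the infimum of the (real) roots of
its characteristic polynomial. -/
noncomputable def lambdaMin {m : ℕ} (M : Matrix (Fin m) (Fin m) ℝ) : ℝ :=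
  sInf {r : ℝ | M.charpoly.IsRoot r}

noncomputable def Fmat (x₁ x₂ : ℝ) : Matrix (Fin 2) (Fin 2) ℝ :=
  !![2*(x₁-1)^2 + (x₂-1)^2 + (x₂-2)^2, 3 - 2*x₂;
     3 - 2*x₂, 2*(x₁-2)^2 + (x₂-1)^2 + (x₂-2)^2]

open Polynomial

theorem Matrix.eval_charpoly_fin_two {R : Type*} [CommRing R] (a b c d r : R) :
    (!![a, b; c, d]).charpoly.eval r = (r - a) * (r - d) - b * c := by
  rw [Matrix.charpoly, Matrix.det_fin_two]
  simp [charmatrix_apply_eq, charmatrix_apply_ne]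

theorem Matrix.le_of_isRoot_charpoly_fin_two {a b c d m r : ℝ} (ha : m ≤ a) (hd : m ≤ d)
    (hbc : b * c ≤ (a - m) * (d - m)) (hr : (!![a, b; c, d]).charpoly.IsRoot r) : m ≤ r := by
  rw [IsRoot, eval_charpoly_fin_two] at hr
  -- Below `m` both factors `a - r`, `d - r` exceed `a - m`, `d - m`, so the charpoly is positive.
  by_contra! hrm
  nlinarith [mul_le_mul (by linarith : a - m ≤ a - r) (by linarith : d - m ≤ d - r)
    (by linarith) (by linarith), mul_pos (by linarith : 0 < a - r) (by linarith : 0 < m - r)]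

theorem Matrix.exists_isRoot_charpoly_fin_two_of_symm (a b d : ℝ) :
    ∃ r, (!![a, b; b, d]).charpoly.IsRoot r := by
  have hdisc : 0 ≤ (a - d) ^ 2 + 4 * b ^ 2 := by positivity
  refine ⟨(a + d + √((a - d) ^ 2 + 4 * b ^ 2)) / 2, ?_⟩
  rw [IsRoot, eval_charpoly_fin_two]
  nlinarith [Real.sq_sqrt hdisc]

theorem half_le_of_isRoot_charpoly_Fmat {x₁ x₂ r : ℝ} (hr : (Fmat x₁ x₂).charpoly.IsRoot r) :
    1 / 2 ≤ r := by
  refine le_of_isRoot_charpoly_fin_two ?_ ?_ ?_ hr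
  · nlinarith [sq_nonneg (x₁ - 1), sq_nonneg (2 * x₂ - 3)]
  · nlinarith [sq_nonneg (x₁ - 2), sq_nonneg (2 * x₂ - 3)]
  · nlinarith [sq_nonneg ((x₁ - 3 / 2) ^ 2 + (x₂ - 3 / 2) ^ 2 - 1 / 4)]

theorem half_le_lambdaMin_Fmat (x₁ x₂ : ℝ) : 1 / 2 ≤ lambdaMin (Fmat x₁ x₂) :=
  le_csInf (exists_isRoot_charpoly_fin_two_of_symm _ _ _) fun _ ↦ half_le_of_isRoot_charpoly_Fmat

theorem lambdaMin_Fmat_three_halves_one : lambdaMin (Fmat (3 / 2) 1) = 1 / 2 := by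
  refine IsLeast.csInf_eq ⟨?_, fun _ ↦ half_le_of_isRoot_charpoly_Fmat⟩
  rw [Set.mem_ofPred_eq, Fmat, IsRoot, eval_charpoly_fin_two]
  norm_num

/-- λ_min(F(3/2,1)) = 1/2, hence inf over K = {x : x₁² ≤ 4, x₂² ≤ 4} of λ_min(F(x)) equals
1/2. -/
theorem stmt_10 :
    lambdaMin (Fmat (3/2) 1) = 1/2 ∧
      sInf ((fun x : ℝ × ℝ => lambdaMin (Fmat x.1 x.2)) ''
        {x : ℝ × ℝ | x.1 ^ 2 ≤ 4 ∧ x.2 ^ 2 ≤ 4}) = 1/2 := by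
  refine ⟨lambdaMin_Fmat_three_halves_one, IsLeast.csInf_eq ⟨?_, ?_⟩⟩
  · exact ⟨(3 / 2, 1), by norm_num, lambdaMin_Fmat_three_halves_one⟩
  · rintro _ ⟨x, -, rfl⟩
    exact half_le_lambdaMin_Fmat x.1 x.2
end

section
/- Let R be a binary matrix whose columns are common sign symmetries of polynomial matrices F, G₁,...,G_m. If F admits a weighted SOS representation F = S₀ + Σ_k ⟨S_k, G_k⟩_p with SOS matrices S_k, then F also admits such a representation where every S_k has support contained in {α ∈ ℕⁿ : Rᵀα ≡ 0 (mod 2)}. -/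
open Matrix MvPolynomial

/-- A polynomial matrix indexed by ι is an SOS matrix if S = RᵀR for some polynomial
matrix R. -/
def IsSOSMatrix {n : ℕ} {ι : Type} [Fintype ι]
    (S : Matrix ι ι (MvPolynomial (Fin n) ℝ)) : Prop :=
  ∃ (s : ℕ) (R : Matrix (Fin s) ι (MvPolynomial (Fin n) ℝ)), S = Rᵀ * R

/-- The block trace product ⟨S, G⟩_p: (i,j)-entry is tr(S_{ij}ᵀ G) where S_{ij} is the
(i,j)-th q×q block of S. -/
noncomputable def blockTraceProd {n p q : ℕ}
    (S : Matrix (Fin p × Fin q) (Fin p × Fin q) (MvPolynomial (Fin n) ℝ))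
    (G : Matrix (Fin q) (Fin q) (MvPolynomial (Fin n) ℝ)) :
    Matrix (Fin p) (Fin p) (MvPolynomial (Fin n) ℝ) :=
  Matrix.of fun i j => ∑ a, ∑ b, S (i, a) (j, b) * G a b


noncomputable section
namespace Stmt12Aux

variable {n c : ℕ} (r : Fin c → Fin n → ZMod 2)

def sgn (x : ZMod 2) : ℝ := if x = 0 then 1 else -1

lemma zmod2_cases (x : ZMod 2) : x = 0 ∨ x = 1 := by fin_cases x <;> [exact Or.inl rfl; exact Or.inr rfl]

lemma sgn_add (x y : ZMod 2) : sgn (x + y) = sgn x * sgn y := by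
  rcases zmod2_cases x with h | h <;> rcases zmod2_cases y with h' | h' <;>
    subst h <;> subst h' <;>
    simp [sgn, show (1 + 1 : ZMod 2) = 0 from by decide]

lemma sgn_sum {ι : Type*} (s : Finset ι) (f : ι → ZMod 2) :
    sgn (∑ i ∈ s, f i) = ∏ i ∈ s, sgn (f i) := by
  classical
  induction s using Finset.induction_on with
  | empty => simp [sgn]
  | insert _ _ h ih => simp [Finset.sum_insert h, Finset.prod_insert h, sgn_add, ih]

lemma sgn_pow (x : ZMod 2) (k : ℕ) : sgn x ^ k = sgn ((k : ZMod 2) * x) := by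
  induction k with
  | zero => simp [sgn]
  | succ k ih =>
      rw [pow_succ, ih, ← sgn_add]
      push_cast
      ring_nf

def cl (α : Fin n →₀ ℕ) : Fin c → ZMod 2 := fun j => ∑ l, r j l * (α l : ZMod 2)

lemma char_sum (w : Fin c → ZMod 2) :
    ∑ θ : Fin c → ZMod 2, sgn (∑ j, θ j * w j) = if w = 0 then (2 ^ c : ℝ) else 0 := by
  classical
  split_ifs with hw
  · subst hw
    simp only [Pi.zero_apply, mul_zero, Finset.sum_const_zero]
    rw [show sgn 0 = 1 from by simp [sgn]]
    simp [Finset.card_univ, Fintype.card_pi]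
  · obtain ⟨j₀, hj⟩ : ∃ j, w j ≠ 0 := by
      by_contra h
      push_neg at h
      exact hw (funext h)
    have hj1 : w j₀ = 1 := (zmod2_cases (w j₀)).resolve_left hj
    set f : (Fin c → ZMod 2) → ℝ := fun θ => sgn (∑ j, θ j * w j) with hf
    set δ : Fin c → ZMod 2 := Pi.single j₀ 1 with hδ
    have h1 : ∀ θ : Fin c → ZMod 2, f (θ + δ) = -f θ := by
      intro θ
      have hsum : ∑ j, (θ + δ) j * w j
          = (∑ j, θ j * w j) + 1 := by
        simp only [hδ, Pi.add_apply, add_mul]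
        rw [Finset.sum_add_distrib]
        congr 1
        rw [Finset.sum_eq_single j₀]
        · simp [hj1]
        · intro b _ hb; simp [Pi.single_apply, hb]
        · simp
      simp only [hf]
      rw [hsum, sgn_add]
      have h2 : sgn 1 = -1 := by simp [sgn, show (1:ZMod 2) ≠ 0 from by decide]
      rw [h2]; ring
    have key : ∑ θ, f θ = ∑ θ, -(f θ) := by
      rw [← Fintype.sum_equiv (Equiv.addRight δ) (fun θ => f (θ + δ)) f (fun θ => rfl)]
      exact Finset.sum_congr rfl fun θ _ => h1 θ
    rw [Finset.sum_neg_distrib] at key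
    linarith


def eps (θ : Fin c → ZMod 2) (l : Fin n) : ℝ := sgn (∑ j, θ j * r j l)

def sig (θ : Fin c → ZMod 2) : MvPolynomial (Fin n) ℝ →ₐ[ℝ] MvPolynomial (Fin n) ℝ :=
  aeval fun l => C (eps r θ l) * X l

lemma sig_monomial (θ : Fin c → ZMod 2) (α : Fin n →₀ ℕ) (a : ℝ) :
    sig r θ (monomial α a) = sgn (∑ j, θ j * cl r α j) • monomial α a := by
  rw [sig, aeval_monomial]
  have h1 : (α.prod fun l e => (C (eps r θ l) * X l : MvPolynomial (Fin n) ℝ) ^ e)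
      = C (∏ l ∈ α.support, eps r θ l ^ α l) * α.prod fun l e => (X l : MvPolynomial (Fin n) ℝ) ^ e := by
    rw [Finsupp.prod, Finsupp.prod, map_prod, ← Finset.prod_mul_distrib]
    exact Finset.prod_congr rfl fun l _ => by rw [mul_pow, map_pow]
  rw [h1]
  have h2 : ∏ l ∈ α.support, eps r θ l ^ α l = ∏ l, eps r θ l ^ α l := by
    apply Finset.prod_subset (Finset.subset_univ _)
    intro l _ hl
    rw [Finsupp.notMem_support_iff] at hl
    simp [hl]
  have h3 : ∏ l, eps r θ l ^ α l = sgn (∑ j, θ j * cl r α j) := by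
    simp only [eps, sgn_pow]
    rw [← sgn_sum]
    congr 1
    simp only [cl, Finset.mul_sum]
    rw [Finset.sum_comm]
    exact Finset.sum_congr rfl fun j _ => Finset.sum_congr rfl fun l _ => by ring
  rw [h2, h3, ← monomial_eq, smul_eq_C_mul, algebraMap_eq, C_mul_monomial,
    C_mul_monomial, mul_comm]

lemma coeff_sig (θ : Fin c → ZMod 2) (p : MvPolynomial (Fin n) ℝ) (α : Fin n →₀ ℕ) :
    coeff α (sig r θ p) = sgn (∑ j, θ j * cl r α j) * coeff α p := by
  induction p using MvPolynomial.induction_on' with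
  | monomial β a =>
      rw [sig_monomial]
      rcases eq_or_ne β α with h | h
      · subst h; simp [coeff_monomial]
      · simp [coeff_monomial, h, Ne.symm h]
  | add p q hp hq => simp [map_add, hp, hq]; ring

def T : MvPolynomial (Fin n) ℝ →ₗ[ℝ] MvPolynomial (Fin n) ℝ :=
  (2 ^ c : ℝ)⁻¹ • ∑ θ : Fin c → ZMod 2, (sig r θ).toLinearMap

lemma T_apply (p : MvPolynomial (Fin n) ℝ) :
    T r p = (2 ^ c : ℝ)⁻¹ • ∑ θ : Fin c → ZMod 2, sig r θ p := by
  simp [T, LinearMap.sum_apply]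

lemma coeff_T (p : MvPolynomial (Fin n) ℝ) (α : Fin n →₀ ℕ) :
    coeff α (T r p) = (if cl r α = 0 then 1 else 0) * coeff α p := by
  rw [T_apply]
  rw [coeff_smul, coeff_sum]
  simp only [coeff_sig]
  rw [← Finset.sum_mul, char_sum]
  split_ifs with h
  · rw [smul_eq_mul, ← mul_assoc, inv_mul_cancel₀ (by positivity)]
  · simp

lemma support_T (p : MvPolynomial (Fin n) ℝ) (α : Fin n →₀ ℕ)
    (h : α ∈ (T r p).support) : cl r α = 0 := by
  by_contra hc
  rw [mem_support_iff, coeff_T, if_neg hc, zero_mul] at h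
  exact h rfl

lemma T_fixed (p : MvPolynomial (Fin n) ℝ) (h : ∀ α ∈ p.support, cl r α = 0) :
    T r p = p := by
  ext α
  rw [coeff_T]
  rcases eq_or_ne (coeff α p) 0 with h0 | h0
  · simp [h0]
  · rw [if_pos (h α (mem_support_iff.mpr h0)), one_mul]

lemma sig_fixed (θ : Fin c → ZMod 2) (g : MvPolynomial (Fin n) ℝ)
    (h : ∀ α ∈ g.support, cl r α = 0) : sig r θ g = g := by
  ext α
  rw [coeff_sig]
  rcases eq_or_ne (coeff α g) 0 with h0 | h0
  · simp [h0]
  · rw [h α (mem_support_iff.mpr h0)]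
    simp [sgn]

lemma T_mul_right (p g : MvPolynomial (Fin n) ℝ) (h : ∀ α ∈ g.support, cl r α = 0) :
    T r (p * g) = T r p * g := by
  rw [T_apply, T_apply, smul_mul_assoc, Finset.sum_mul]
  congr 1
  exact Finset.sum_congr rfl fun θ _ => by rw [_root_.map_mul, sig_fixed r θ g h]

lemma isSOS_of_fintype {n : ℕ} {ι κ : Type} [Fintype ι] [Fintype κ]
    (R : Matrix κ ι (MvPolynomial (Fin n) ℝ)) : IsSOSMatrix (Rᵀ * R) := by
  classical
  refine ⟨Fintype.card κ, R.submatrix (Fintype.equivFin κ).symm id, ?_⟩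
  apply Matrix.ext
  intro a b
  simp only [Matrix.mul_apply, Matrix.transpose_apply, Matrix.submatrix_apply, id]
  exact Fintype.sum_equiv (Fintype.equivFin κ) _ _ fun x => by simp

lemma isSOS_T {n c : ℕ} (r : Fin c → Fin n → ZMod 2) {ι : Type} [Fintype ι]
    {S : Matrix ι ι (MvPolynomial (Fin n) ℝ)} (h : IsSOSMatrix S) :
    IsSOSMatrix (Matrix.of fun a b => T r (S a b)) := by
  classical
  obtain ⟨s, R, rfl⟩ := h
  set t : ℝ := (Real.sqrt (2 ^ c))⁻¹ with ht
  have ht2 : t * t = (2 ^ c : ℝ)⁻¹ := by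
    rw [ht, ← mul_inv]
    congr 1
    exact Real.mul_self_sqrt (by positivity)
  set R' : Matrix ((Fin c → ZMod 2) × Fin s) ι (MvPolynomial (Fin n) ℝ) :=
    Matrix.of fun θi a => C t * sig r θi.1 (R θi.2 a) with hR'
  have : (Matrix.of fun a b => T r ((Rᵀ * R) a b)) = R'ᵀ * R' := by
    apply Matrix.ext
    intro a b
    simp only [Matrix.of_apply, Matrix.mul_apply, Matrix.transpose_apply, hR']
    rw [T_apply, Fintype.sum_prod_type, Finset.smul_sum]
    refine Finset.sum_congr rfl fun θ _ => ?_
    rw [_root_.map_sum, Finset.smul_sum]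
    refine Finset.sum_congr rfl fun i _ => ?_
    rw [_root_.map_mul, smul_eq_C_mul, ← ht2, C_mul]
    ring
  rw [this]
  exact isSOS_of_fintype R'

end Stmt12Aux
end

/-- If all exponents of F and of the G_k are even with respect to the sign symmetries
recorded in the columns of R, then any weighted SOS representation
F = S₀ + Σ_k ⟨S_k, G_k⟩_p can be replaced by one where every S_k is supported on
exponents α with Rᵀα ≡ 0 (mod 2). -/
theorem stmt_12 {n p m c : ℕ} (q : Fin m → ℕ)
    (F : Matrix (Fin p) (Fin p) (MvPolynomial (Fin n) ℝ))
    (G : (k : Fin m) → Matrix (Fin (q k)) (Fin (q k)) (MvPolynomial (Fin n) ℝ))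
    (r : Fin c → Fin n → ZMod 2)
    (hF : ∀ (j : Fin c) (i i' : Fin p) (α : Fin n →₀ ℕ), α ∈ (F i i').support →
      ∑ l, r j l * (α l : ZMod 2) = 0)
    (hG : ∀ (j : Fin c) (k : Fin m) (a b : Fin (q k)) (α : Fin n →₀ ℕ),
      α ∈ ((G k) a b).support → ∑ l, r j l * (α l : ZMod 2) = 0)
    (S0 : Matrix (Fin p) (Fin p) (MvPolynomial (Fin n) ℝ))
    (S : (k : Fin m) → Matrix (Fin p × Fin (q k)) (Fin p × Fin (q k)) (MvPolynomial (Fin n) ℝ))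
    (hS0 : IsSOSMatrix S0) (hS : ∀ k, IsSOSMatrix (S k))
    (hrep : F = S0 + ∑ k, blockTraceProd (S k) (G k)) :
    ∃ (S0' : Matrix (Fin p) (Fin p) (MvPolynomial (Fin n) ℝ))
      (S' : (k : Fin m) → Matrix (Fin p × Fin (q k)) (Fin p × Fin (q k)) (MvPolynomial (Fin n) ℝ)),
        IsSOSMatrix S0' ∧ (∀ k, IsSOSMatrix (S' k)) ∧
        (∀ (i i' : Fin p) (α : Fin n →₀ ℕ), α ∈ (S0' i i').support →
          ∀ j, ∑ l, r j l * (α l : ZMod 2) = 0) ∧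
        (∀ (k : Fin m) (a b : Fin p × Fin (q k)) (α : Fin n →₀ ℕ), α ∈ ((S' k) a b).support →
          ∀ j, ∑ l, r j l * (α l : ZMod 2) = 0) ∧
        F = S0' + ∑ k, blockTraceProd (S' k) (G k) := by

  classical
  open Stmt12Aux in
  refine ⟨Matrix.of fun i i' => T r (S0 i i'),
    fun k => Matrix.of fun a b => T r (S k a b),
    isSOS_T r hS0, fun k => isSOS_T r (hS k), ?_, ?_, ?_⟩
  · intro i i' α hα j
    exact congrFun (support_T r _ α hα) j
  · intro k a b α hα j
    exact congrFun (support_T r _ α hα) j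
  · apply Matrix.ext
    intro i i'
    have hF0 : ∀ α ∈ (F i i').support, cl r α = 0 :=
      fun α hα => funext fun j => hF j i i' α hα
    have step : ∀ k, T r ((blockTraceProd (S k) (G k)) i i')
        = (blockTraceProd (Matrix.of fun a b => T r (S k a b)) (G k)) i i' := by
      intro k
      simp only [blockTraceProd, Matrix.of_apply]
      rw [_root_.map_sum]
      refine Finset.sum_congr rfl fun a _ => ?_
      rw [_root_.map_sum]
      refine Finset.sum_congr rfl fun b _ => ?_
      exact T_mul_right r _ _ (fun α hα => funext fun j => hG j k a b α hα)
    calc F i i' = T r (F i i') := (T_fixed r _ hF0).symm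
      _ = T r (S0 i i') + ∑ k, T r ((blockTraceProd (S k) (G k)) i i') := by
          rw [hrep]
          simp only [Matrix.add_apply, Matrix.sum_apply, map_add, _root_.map_sum]
      _ = _ := by
          rw [Matrix.add_apply, Matrix.sum_apply, Matrix.of_apply]
          congr 1
          exact Finset.sum_congr rfl fun k _ => step k
end

section
/- In the scalarized PMI yᵀF(x)y for F ∈ 𝕊^p[x] of degree 2d, the set of x-monomials that can appear multiplied by y_j in an SOS representation is exactly the set of integral points of (1/2)·New(F_{jj}), where F_{jj} is the j-th diagonal entry of F. That is, if F is SOS, one may without loss of generality choose the j-th monomial basis v^j(x) = {x^α : α ∈ ℕⁿ ∩ (1/2)New(F_{jj})}. -/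
open Matrix MvPolynomial Pointwise

private lemma sos_newton {n s : ℕ} (q : Fin s → MvPolynomial (Fin n) ℝ)
    (i : Fin s) (α : Fin n →₀ ℕ) (hα : α ∈ (q i).support) :
    (fun l => (α l : ℝ)) ∈
      (1 / 2 : ℝ) • convexHull ℝ
        ((fun β : Fin n →₀ ℕ => fun l => (β l : ℝ)) ''
          (((∑ k, q k * q k).support : Finset (Fin n →₀ ℕ)) : Set (Fin n →₀ ℕ))) := by
  classical
  set φ : (Fin n →₀ ℕ) → (Fin n → ℝ) := fun β l => (β l : ℝ) with hφ
  have hφinj : Function.Injective φ := by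
    intro β γ h
    ext l
    have := congrFun h l
    simp only [φ] at this
    exact_mod_cast this
  set U : Set (Fin n →₀ ℕ) := ⋃ k, ((q k).support : Set (Fin n →₀ ℕ)) with hU
  have hUfin : U.Finite := Set.finite_iUnion fun k => (q k).support.finite_toSet
  set T : Set (Fin n → ℝ) := φ '' U with hT
  have hTfin : T.Finite := hUfin.image φ
  set S : Set (Fin n → ℝ) := convexHull ℝ T with hS
  set g : MvPolynomial (Fin n) ℝ := ∑ k, q k * q k with hg
  -- extreme points of S lie in (1/2) • φ '' supp g
  have hext : S.extremePoints ℝ ⊆ (1 / 2 : ℝ) • (φ '' (g.support : Set (Fin n →₀ ℕ))) := by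
    intro v hv
    have hvT : v ∈ T := extremePoints_convexHull_subset hv
    obtain ⟨α₀, hα₀U, rfl⟩ := hvT
    -- pairwise claim
    have hpair : ∀ β γ : Fin n →₀ ℕ, β ∈ U → γ ∈ U → β + γ = α₀ + α₀ → β = α₀ ∧ γ = α₀ := by
      intro β γ hβ hγ hbg
      have hβS : φ β ∈ S := subset_convexHull ℝ T ⟨β, hβ, rfl⟩
      have hγS : φ γ ∈ S := subset_convexHull ℝ T ⟨γ, hγ, rfl⟩
      have hsum : φ β + φ γ = φ α₀ + φ α₀ := by
        funext l
        have := congrArg (fun d : Fin n →₀ ℕ => ((d l : ℕ) : ℝ)) hbg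
        simpa [φ] using this
      have hβγ : φ β = φ γ := by
        by_contra hne
        have hseg : φ α₀ ∈ openSegment ℝ (φ β) (φ γ) := by
          refine ⟨1/2, 1/2, by norm_num, by norm_num, by norm_num, ?_⟩
          have h2 : φ α₀ = (1/2 : ℝ) • (φ β + φ γ) := by
            rw [hsum]; funext l; simp [φ]; ring
          rw [h2, smul_add]
        obtain ⟨h1, h2⟩ := (mem_extremePoints.1 hv).2 _ hβS _ hγS hseg
        exact hne (h1.trans h2.symm)
      have hβα : φ β = φ α₀ := by
        rw [hβγ] at hsum
        rw [hβγ]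
        funext l
        have := congrFun hsum l
        simp only [Pi.add_apply] at this
        linarith [this]
      have hβ' : β = α₀ := hφinj hβα
      subst hβ'
      exact ⟨rfl, add_left_cancel hbg⟩
    -- coefficient computation
    have hcoeff : ∀ k : Fin s, coeff (α₀ + α₀) (q k * q k) = (coeff α₀ (q k))^2 := by
      intro k
      rw [MvPolynomial.coeff_mul]
      have hone : ∀ x ∈ Finset.HasAntidiagonal.antidiagonal (α₀ + α₀),
          x ≠ ((α₀, α₀) : (Fin n →₀ ℕ) × (Fin n →₀ ℕ)) →
          coeff x.1 (q k) * coeff x.2 (q k) = 0 := by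
        intro x hx hne
        rw [Finset.HasAntidiagonal.mem_antidiagonal] at hx
        by_contra h0
        have h1 : coeff x.1 (q k) ≠ 0 := fun h => h0 (by rw [h, zero_mul])
        have h2 : coeff x.2 (q k) ≠ 0 := fun h => h0 (by rw [h, mul_zero])
        have hx1 : x.1 ∈ U := Set.mem_iUnion.2 ⟨k, by simpa [MvPolynomial.mem_support_iff] using h1⟩
        have hx2 : x.2 ∈ U := Set.mem_iUnion.2 ⟨k, by simpa [MvPolynomial.mem_support_iff] using h2⟩
        obtain ⟨e1, e2⟩ := hpair x.1 x.2 hx1 hx2 hx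
        apply hne
        exact Prod.ext e1 e2
      rw [Finset.sum_eq_single_of_mem ((α₀, α₀) : (Fin n →₀ ℕ) × (Fin n →₀ ℕ))
        (Finset.HasAntidiagonal.mem_antidiagonal.2 rfl) hone]
      ring
    obtain ⟨k₀, hk₀⟩ := Set.mem_iUnion.1 hα₀U
    have hgpos : coeff (α₀ + α₀) g ≠ 0 := by
      have : coeff (α₀ + α₀) g = ∑ k, (coeff α₀ (q k))^2 := by
        rw [hg, MvPolynomial.coeff_sum]
        exact Finset.sum_congr rfl fun k _ => hcoeff k
      rw [this]
      have hpos : (0:ℝ) < ∑ k, (coeff α₀ (q k))^2 := by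
        apply Finset.sum_pos' (fun k _ => sq_nonneg _)
        refine ⟨k₀, Finset.mem_univ _, ?_⟩
        have : coeff α₀ (q k₀) ≠ 0 := MvPolynomial.mem_support_iff.1 hk₀
        positivity
      exact ne_of_gt hpos
    refine ⟨φ (α₀ + α₀), ⟨α₀ + α₀, MvPolynomial.mem_support_iff.2 hgpos, rfl⟩, ?_⟩
    funext l
    simp [φ]
    ring
  -- S ⊆ (1/2) • convexHull (φ '' supp g)
  have hSsub : S ⊆ (1 / 2 : ℝ) • convexHull ℝ (φ '' (g.support : Set (Fin n →₀ ℕ))) := by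
    have hcomp : IsCompact S := hTfin.isCompact_convexHull ℝ
    have hconv : Convex ℝ S := convex_convexHull ℝ T
    have hEfin : (S.extremePoints ℝ).Finite := hTfin.subset extremePoints_convexHull_subset
    have hclosed := hEfin.isClosed_convexHull ℝ
    have := closure_convexHull_extremePoints hcomp hconv
    rw [hclosed.closure_eq] at this
    calc S = convexHull ℝ (S.extremePoints ℝ) := this.symm
      _ ⊆ convexHull ℝ ((1 / 2 : ℝ) • (φ '' (g.support : Set (Fin n →₀ ℕ)))) := convexHull_mono hext
      _ = (1 / 2 : ℝ) • convexHull ℝ (φ '' (g.support : Set (Fin n →₀ ℕ))) := convexHull_smul _ _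
  exact hSsub (subset_convexHull ℝ T ⟨α, Set.mem_iUnion.2 ⟨i, hα⟩, rfl⟩)

/-- If F ∈ 𝕊^p[x] is an SOS matrix, then it admits an SOS factorization F = RᵀR in which,
for each column j, every monomial appearing in the j-th column of R (i.e. multiplied by
y_j in the scalarization) lies in the integral points of (1/2)·New(F_{jj}). -/
theorem stmt_13 {n p : ℕ} (F : Matrix (Fin p) (Fin p) (MvPolynomial (Fin n) ℝ))
    (hsos : ∃ (s : ℕ) (R : Matrix (Fin s) (Fin p) (MvPolynomial (Fin n) ℝ)), F = Rᵀ * R) :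
    ∃ (s : ℕ) (R : Matrix (Fin s) (Fin p) (MvPolynomial (Fin n) ℝ)), F = Rᵀ * R ∧
      ∀ (i : Fin s) (j : Fin p) (α : Fin n →₀ ℕ), α ∈ (R i j).support →
        (fun l => (α l : ℝ)) ∈
          (1 / 2 : ℝ) • convexHull ℝ
            ((fun β : Fin n →₀ ℕ => fun l => (β l : ℝ)) ''
              ((F j j).support : Set (Fin n →₀ ℕ))) := by
  obtain ⟨s, R, rfl⟩ := hsos
  refine ⟨s, R, rfl, ?_⟩
  intro i j α hα
  have hdiag : (Rᵀ * R) j j = ∑ k, R k j * R k j := by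
    simp [Matrix.mul_apply, Matrix.transpose_apply]
  rw [hdiag]
  exact sos_newton (fun k => R k j) i α hα
end

section
/- Let G(x) ∈ 𝕊^q[x] have a chordal sparsity graph G with maximal cliques C₁,...,C_t, and let S(x) ∈ 𝕊^{pq}[x] be an SOS matrix of degree 2d. Then there exists Q in the q-block-partitioned PSD-completable cone with pattern G (of size pq·|m_d(x)|) such that ⟨S(x), G(x)⟩_p = ⟨(I_{pq} ⊗ m_d(x))ᵀ Q̃ (I_{pq} ⊗ m_d(x)), G(x)⟩_p, where Q̃ is obtained from Q by row and column permutations. -/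
open Matrix MvPolynomial

/-- Index type for the monomials of degree at most d in n variables. -/
def MonIdx (n d : ℕ) : Type :=
  {v : Fin n → Fin (d + 1) // (∑ l, (v l : ℕ)) ≤ d}

instance (n d : ℕ) : Fintype (MonIdx n d) := by
  unfold MonIdx; infer_instance

instance (n d : ℕ) : DecidableEq (MonIdx n d) := by
  unfold MonIdx; infer_instance

/-- The exponent (multi-index) corresponding to a monomial index. -/
noncomputable def MonIdx.toFinsupp {n d : ℕ} (v : MonIdx n d) : Fin n →₀ ℕ :=
  Finsupp.equivFunOnFinite.symm fun l => (v.1 l : ℕ)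

lemma MonIdx.toFinsupp_injective {n d : ℕ} :
    Function.Injective (MonIdx.toFinsupp (n := n) (d := d)) := by
  intro v w h
  unfold MonIdx.toFinsupp at h
  have h2 := Finsupp.equivFunOnFinite.symm.injective h
  apply Subtype.ext
  funext l
  exact Fin.val_injective (congrFun h2 l)

lemma exists_monIdx {n d : ℕ} (g : Fin n →₀ ℕ) (hg : (g.sum fun _ e => e) ≤ d) :
    ∃ v : MonIdx n d, MonIdx.toFinsupp v = g := by
  have hsum : (g.sum fun _ e => e) = ∑ l, g l := Finsupp.sum_fintype _ _ (fun _ => rfl)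
  have hle : ∀ l, g l ≤ d := fun l =>
    le_trans (hsum ▸ Finset.single_le_sum (f := fun l => g l)
      (fun _ _ => Nat.zero_le _) (Finset.mem_univ l)) hg
  refine ⟨⟨fun l => ⟨g l, Nat.lt_succ_of_le (hle l)⟩, ?_⟩, ?_⟩
  · simpa [← hsum] using hg
  · show Finsupp.equivFunOnFinite.symm (fun l => ((g l : ℕ))) = g
    have : (fun l => (g l : ℕ)) = ⇑g := rfl
    rw [this, Finsupp.equivFunOnFinite_symm_coe]

lemma recon {n d : ℕ} (f : MvPolynomial (Fin n) ℝ) (hf : f.totalDegree ≤ d) :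
    f = ∑ α : MonIdx n d,
      MvPolynomial.monomial (MonIdx.toFinsupp α) (MvPolynomial.coeff (MonIdx.toFinsupp α) f) := by
  classical
  have h1 : (∑ β ∈ Finset.univ.image (MonIdx.toFinsupp (n := n) (d := d)),
        MvPolynomial.monomial β (MvPolynomial.coeff β f))
      = ∑ α : MonIdx n d,
      MvPolynomial.monomial (MonIdx.toFinsupp α) (MvPolynomial.coeff (MonIdx.toFinsupp α) f) :=
    Finset.sum_image (fun x _ y _ h => MonIdx.toFinsupp_injective h)
  have hsub : f.support ⊆ Finset.univ.image (MonIdx.toFinsupp (n := n) (d := d)) := by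
    intro β hβ
    obtain ⟨v, hv⟩ := exists_monIdx β (le_trans (MvPolynomial.le_totalDegree hβ) hf)
    exact Finset.mem_image.mpr ⟨v, Finset.mem_univ v, hv⟩
  have h2 := Finset.sum_subset hsub (fun β _ hβ => by
    simp only [MvPolynomial.notMem_support_iff.mp hβ, map_zero])
    (f := fun β => MvPolynomial.monomial β (MvPolynomial.coeff β f))
  rw [← h1, ← h2, MvPolynomial.support_sum_monomial_coeff]

lemma recon_mul {n d : ℕ} (f g : MvPolynomial (Fin n) ℝ)
    (hf : f.totalDegree ≤ d) (hg : g.totalDegree ≤ d) :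
    f * g = ∑ α : MonIdx n d, ∑ β : MonIdx n d,
      MvPolynomial.C (MvPolynomial.coeff (MonIdx.toFinsupp α) f *
          MvPolynomial.coeff (MonIdx.toFinsupp β) g) *
        MvPolynomial.monomial (MonIdx.toFinsupp α + MonIdx.toFinsupp β) (1 : ℝ) := by
  conv_lhs => rw [recon f hf, recon g hg]
  rw [Finset.sum_mul_sum]
  refine Finset.sum_congr rfl (fun α _ => Finset.sum_congr rfl (fun β _ => ?_))
  rw [MvPolynomial.monomial_mul, MvPolynomial.C_mul_monomial, mul_one]

lemma sos_totalDegree {n d s : ℕ} (f : Fin s → MvPolynomial (Fin n) ℝ)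
    (h : (∑ k, f k * f k).totalDegree ≤ 2 * d) (k : Fin s) : (f k).totalDegree ≤ d := by
  classical
  by_contra hk
  push_neg at hk
  set D := Finset.univ.sup (fun k => (f k).totalDegree) with hD
  have hdD : d < D := by
    rw [hD]
    exact lt_of_lt_of_le hk (Finset.le_sup (f := fun k => (f k).totalDegree) (Finset.mem_univ k))
  set T : Finset (Fin n →₀ ℕ) :=
    Finset.univ.biUnion (fun k => (f k).support.filter (fun α => (α.sum fun _ e => e) = D)) with hT
  have hTmem : ∀ α, α ∈ T ↔ ∃ k, α ∈ (f k).support ∧ (α.sum fun _ e => e) = D := by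
    intro α
    simp [hT, Finset.mem_biUnion, Finset.mem_filter]
  -- T is nonempty
  obtain ⟨k1, -, hk1⟩ := Finset.exists_mem_eq_sup Finset.univ ⟨k, Finset.mem_univ k⟩
    (fun k => (f k).totalDegree)
  have hne : f k1 ≠ 0 := by
    intro h0
    rw [h0, MvPolynomial.totalDegree_zero] at hk1
    omega
  obtain ⟨μ1, hμ1s, hμ1⟩ := Finset.exists_mem_eq_sup ((f k1).support)
    (MvPolynomial.support_nonempty.mpr hne) (fun s => s.sum fun _ e => e)
  have hμ1T : μ1 ∈ T := (hTmem μ1).mpr ⟨k1, hμ1s, by rw [← hμ1, hD, hk1]; rfl⟩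
  obtain ⟨μ, hμT, hμmax⟩ := T.exists_max_image (fun α => toLex α) ⟨μ1, hμ1T⟩
  have hμD : (μ.sum fun _ e => e) = D := ((hTmem μ).mp hμT).choose_spec.2
  -- the coefficient of μ + μ in the sum of squares
  have hcoeff : MvPolynomial.coeff (μ + μ) (∑ k, f k * f k)
      = ∑ k, (MvPolynomial.coeff μ (f k)) ^ 2 := by
    rw [MvPolynomial.coeff_sum]
    refine Finset.sum_congr rfl (fun k2 _ => ?_)
    rw [MvPolynomial.coeff_mul]
    refine Finset.sum_eq_single_of_mem (μ, μ) (Finset.HasAntidiagonal.mem_antidiagonal.mpr rfl) ?_ |>.trans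
      (sq (MvPolynomial.coeff μ (f k2))).symm
    rintro ⟨α, β⟩ hab hnepair
    rw [Finset.HasAntidiagonal.mem_antidiagonal] at hab
    by_contra hc
    have hα : α ∈ (f k2).support := by
      rw [MvPolynomial.mem_support_iff]; intro h0; apply hc; rw [h0, zero_mul]
    have hβ : β ∈ (f k2).support := by
      rw [MvPolynomial.mem_support_iff]; intro h0; apply hc; rw [h0, mul_zero]
    have hαD : (α.sum fun _ e => e) ≤ D := by
      rw [hD]
      exact le_trans (MvPolynomial.le_totalDegree hα)
        (Finset.le_sup (f := fun k => (f k).totalDegree) (Finset.mem_univ k2))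
    have hβD : (β.sum fun _ e => e) ≤ D := by
      rw [hD]
      exact le_trans (MvPolynomial.le_totalDegree hβ)
        (Finset.le_sup (f := fun k => (f k).totalDegree) (Finset.mem_univ k2))
    have hsum : (α.sum fun _ e => e) + (β.sum fun _ e => e) = D + D := by
      rw [← Finsupp.sum_add_index' (fun _ => rfl) (fun _ _ _ => rfl), hab,
        Finsupp.sum_add_index' (fun _ => rfl) (fun _ _ _ => rfl), hμD]
    have hαT : α ∈ T := (hTmem α).mpr ⟨k2, hα, by omega⟩
    have hβT : β ∈ T := (hTmem β).mpr ⟨k2, hβ, by omega⟩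
    have hαμ : toLex α ≤ toLex μ := hμmax α hαT
    have hβμ : toLex β ≤ toLex μ := hμmax β hβT
    have haddLex : toLex α + toLex β = toLex μ + toLex μ := congrArg toLex hab
    have hαeq : α = μ := by
      by_contra hne'
      have : toLex α < toLex μ := lt_of_le_of_ne hαμ (fun h => hne' (toLex.injective h))
      exact absurd haddLex (ne_of_lt (add_lt_add_of_lt_of_le this hβμ))
    have hβeq : β = μ := by
      apply toLex.injective
      rw [hαeq] at haddLex
      exact add_left_cancel haddLex
    exact hnepair (by rw [hαeq, hβeq])
  -- but this coefficient is zero by the degree bound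
  have hzero : MvPolynomial.coeff (μ + μ) (∑ k, f k * f k) = 0 := by
    apply MvPolynomial.coeff_eq_zero_of_totalDegree_lt
    have : ((μ + μ).sum fun _ e => e) = D + D := by
      rw [Finsupp.sum_add_index' (fun _ => rfl) (fun _ _ _ => rfl), hμD]
    calc (∑ k, f k * f k).totalDegree ≤ 2 * d := h
      _ < ∑ i ∈ (μ + μ).support, (μ + μ) i := by
          have : (∑ i ∈ (μ + μ).support, (μ + μ) i) = D + D := this
          omega
  rw [hcoeff] at hzero
  obtain ⟨k2, hk2s, hk2D⟩ := (hTmem μ).mp hμT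
  have : (MvPolynomial.coeff μ (f k2)) ^ 2 = 0 :=
    (Finset.sum_eq_zero_iff_of_nonneg (fun i _ => sq_nonneg _)).mp hzero k2 (Finset.mem_univ k2)
  exact (MvPolynomial.mem_support_iff.mp hk2s) (pow_eq_zero_iff two_ne_zero |>.mp this)

/-- If G(x) ∈ 𝕊^q[x] has a chordal sparsity graph 𝒢 and S(x) ∈ 𝕊^{pq}[x] is an SOS matrix
of degree 2d, then there is a Gram matrix Q in the q-block-partitioned PSD-completable
cone with pattern 𝒢 such that ⟨S(x),G(x)⟩_p = ⟨(I_{pq} ⊗ m_d(x))ᵀ Q̃ (I_{pq} ⊗ m_d(x)),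
G(x)⟩_p. -/
theorem stmt_18 {n p q d : ℕ} (𝒢 : SimpleGraph (Fin q)) [DecidableRel 𝒢.Adj]
    (hchordal : IsChordal 𝒢)
    (G : Matrix (Fin q) (Fin q) (MvPolynomial (Fin n) ℝ))
    (hGsymm : G.IsSymm)
    (hsp : ∀ a b : Fin q, a ≠ b → ¬ 𝒢.Adj a b → G a b = 0)
    (S : Matrix (Fin p × Fin q) (Fin p × Fin q) (MvPolynomial (Fin n) ℝ))
    (hS : ∃ (s : ℕ) (R : Matrix (Fin s) (Fin p × Fin q) (MvPolynomial (Fin n) ℝ)),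
      S = Rᵀ * R)
    (hdeg : ∀ a b, (S a b).totalDegree ≤ 2 * d) :
    ∃ Q : Matrix ((Fin p × Fin q) × MonIdx n d) ((Fin p × Fin q) × MonIdx n d) ℝ,
      (∃ P : Matrix ((Fin p × Fin q) × MonIdx n d) ((Fin p × Fin q) × MonIdx n d) ℝ,
        P.PosSemidef ∧
          ∀ (i : Fin p) (a : Fin q) (α : MonIdx n d) (j : Fin p) (b : Fin q) (β : MonIdx n d),
            Q ((i, a), α) ((j, b), β) =
              if a = b ∨ 𝒢.Adj a b then P ((i, a), α) ((j, b), β) else 0) ∧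
      blockTraceProd S G =
        blockTraceProd
          (Matrix.of fun (u w : Fin p × Fin q) =>
            ∑ α : MonIdx n d, ∑ β : MonIdx n d,
              MvPolynomial.C (Q (u, α) (w, β)) *
                MvPolynomial.monomial (MonIdx.toFinsupp α + MonIdx.toFinsupp β) (1 : ℝ)) G := by
  classical
  obtain ⟨s, R, rfl⟩ := hS
  have hRdeg : ∀ (u : Fin p × Fin q) (k : Fin s), (R k u).totalDegree ≤ d := by
    intro u k
    apply sos_totalDegree (fun k => R k u) ?_ k
    have h1 : ∑ k, R k u * R k u = (Rᵀ * R) u u := by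
      simp [Matrix.mul_apply, Matrix.transpose_apply]
    rw [h1]
    exact hdeg u u
  set A : Matrix (Fin s) ((Fin p × Fin q) × MonIdx n d) ℝ :=
    Matrix.of fun k uα => MvPolynomial.coeff (MonIdx.toFinsupp uα.2) (R k uα.1) with hA
  set P : Matrix ((Fin p × Fin q) × MonIdx n d) ((Fin p × Fin q) × MonIdx n d) ℝ :=
    Aᴴ * A with hP
  have hPentry : ∀ (u w : Fin p × Fin q) (α β : MonIdx n d),
      P (u, α) (w, β) = ∑ k, MvPolynomial.coeff (MonIdx.toFinsupp α) (R k u) *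
        MvPolynomial.coeff (MonIdx.toFinsupp β) (R k w) := by
    intro u w α β
    simp [hP, hA, Matrix.mul_apply, Matrix.conjTranspose_apply]
  have hSP : ∀ (u w : Fin p × Fin q), (Rᵀ * R) u w =
      ∑ α : MonIdx n d, ∑ β : MonIdx n d,
        MvPolynomial.C (P (u, α) (w, β)) *
          MvPolynomial.monomial (MonIdx.toFinsupp α + MonIdx.toFinsupp β) (1 : ℝ) := by
    intro u w
    have h1 : (Rᵀ * R) u w = ∑ k, R k u * R k w := by
      simp [Matrix.mul_apply, Matrix.transpose_apply]
    rw [h1]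
    have h2 : ∀ k : Fin s, R k u * R k w = ∑ α : MonIdx n d, ∑ β : MonIdx n d,
        MvPolynomial.C (MvPolynomial.coeff (MonIdx.toFinsupp α) (R k u) *
            MvPolynomial.coeff (MonIdx.toFinsupp β) (R k w)) *
          MvPolynomial.monomial (MonIdx.toFinsupp α + MonIdx.toFinsupp β) (1 : ℝ) :=
      fun k => recon_mul _ _ (hRdeg u k) (hRdeg w k)
    rw [Finset.sum_congr rfl (fun k _ => h2 k), Finset.sum_comm]
    refine Finset.sum_congr rfl (fun α _ => ?_)
    rw [Finset.sum_comm]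
    refine Finset.sum_congr rfl (fun β _ => ?_)
    rw [hPentry, map_sum, Finset.sum_mul]
  refine ⟨Matrix.of fun x y =>
      if x.1.2 = y.1.2 ∨ 𝒢.Adj x.1.2 y.1.2 then P x y else 0,
    ⟨P, Matrix.posSemidef_conjTranspose_mul_self A, fun i a α j b β => rfl⟩, ?_⟩
  refine Matrix.ext fun i j => ?_
  simp only [blockTraceProd, Matrix.of_apply]
  apply Finset.sum_congr rfl
  intro a _
  apply Finset.sum_congr rfl
  intro b _
  by_cases hab : a = b ∨ 𝒢.Adj a b
  · congr 1
    rw [hSP (i, a) (j, b)]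
    refine Finset.sum_congr rfl (fun α _ => Finset.sum_congr rfl (fun β _ => ?_))
    simp only [Matrix.of_apply, if_pos hab]
  · push_neg at hab
    rw [hsp a b hab.1 hab.2, mul_zero, mul_zero]
end
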